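/- arXiv:1911.06284 — 12 statements merged into one kernel-verified Lean document; each statement's English description precedes it below -/
import Mathlib

section
/- For all x, x' ∈ 𝒳_K and all y ∈ Y one has ⟨K(x') − K(x) − ∇K(x)(x' − x), y⟩ ≤ (L/2)·‖x − x'‖²·‖P y‖. -/
/-!
The remainder `Δ = K x' - K x - ∇K(x)(x' - x)` obeys the quadratic Taylor bound
`‖Δ‖ ≤ (L/2)‖x' - x‖²`, obtained by integrating the Lipschitz bound on `∇K` along the segment
`[x, x']`. Applied to `(id - P) ∘ K`, whose derivative is constant, the same bound with `L = 0`
shows `(id - P) Δ = 0`, i.e. `P Δ = Δ`. Since `P` is self-adjoint, `⟪Δ, y⟫ = ⟪Δ, P y⟫`, and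
Cauchy–Schwarz concludes.
-/

open scoped RealInnerProductSpace

open Set

section Taylor

variable {E F : Type*} [NormedAddCommGroup E] [NormedSpace ℝ E]
  [NormedAddCommGroup F] [NormedSpace ℝ F]

theorem norm_image_one_sub_image_zero_le_of_norm_deriv_le_mul {f f' : ℝ → F} {C : ℝ}
    (hf : ∀ t ∈ Icc (0 : ℝ) 1, HasDerivWithinAt f (f' t) (Icc 0 1) t)
    (bound : ∀ t ∈ Ico (0 : ℝ) 1, ‖f' t‖ ≤ C * t) :
    ‖f 1 - f 0‖ ≤ C / 2 := by
  have hg : ∀ t ∈ Icc (0 : ℝ) 1, HasDerivWithinAt (fun t => f t - f 0) (f' t) (Icc 0 1) t :=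
    fun t ht => (hf t ht).sub_const _
  have hB : ∀ t : ℝ, HasDerivAt (fun t : ℝ => C / 2 * t ^ 2) (C * t) t := fun t =>
    ((hasDerivAt_pow 2 t).const_mul (C / 2)).congr_deriv (by push_cast; ring)
  have key := image_norm_le_of_norm_deriv_right_le_deriv_boundary
    (fun t ht => (hg t ht).continuousWithinAt)
    (fun t ht => (hg t (Ico_subset_Icc_self ht)).mono_of_mem_nhdsWithin (Icc_mem_nhdsGE_of_mem ht))
    (by simp) hB bound (right_mem_Icc.2 zero_le_one)
  simpa using key

theorem Convex.norm_image_sub_sub_fderiv_le {s : Set E} (hs : Convex ℝ s)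
    {K : E → F} {DK : E → E →L[ℝ] F} (hK : ∀ x ∈ s, HasFDerivWithinAt K (DK x) s x) {M : ℝ}
    (hLip : ∀ x ∈ s, ∀ x' ∈ s, ‖DK x - DK x'‖ ≤ M * ‖x - x'‖)
    {x x' : E} (hx : x ∈ s) (hx' : x' ∈ s) :
    ‖K x' - K x - DK x (x' - x)‖ ≤ M / 2 * ‖x' - x‖ ^ 2 := by
  set v := x' - x
  set γ : ℝ → E := fun t => x + t • v
  have hγs : ∀ t ∈ Icc (0 : ℝ) 1, γ t ∈ s := fun t ht => hs.add_smul_sub_mem hx hx' ht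
  have hderiv : ∀ t ∈ Icc (0 : ℝ) 1, HasDerivWithinAt (fun t => K (γ t) - t • DK x v)
      ((DK (γ t) - DK x) v) (Icc 0 1) t := by
    intro t ht
    have hγ : HasDerivAt γ v t := by
      simpa [γ] using ((hasDerivAt_id t).smul_const v).const_add x
    have hKγ := (hK (γ t) (hγs t ht)).comp_hasDerivWithinAt t hγ.hasDerivWithinAt hγs
    have hlin : HasDerivAt (fun t : ℝ => t • DK x v) (DK x v) t := by
      simpa using (hasDerivAt_id t).smul_const (DK x v)
    exact hKγ.sub hlin.hasDerivWithinAt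
  have bound : ∀ t ∈ Ico (0 : ℝ) 1, ‖(DK (γ t) - DK x) v‖ ≤ M * ‖v‖ ^ 2 * t := by
    intro t ht
    have hγx : ‖γ t - x‖ = t * ‖v‖ := by simp [γ, norm_smul, abs_of_nonneg ht.1]
    calc ‖(DK (γ t) - DK x) v‖ ≤ ‖DK (γ t) - DK x‖ * ‖v‖ := ContinuousLinearMap.le_opNorm _ _
      _ ≤ M * ‖γ t - x‖ * ‖v‖ := by
          gcongr; exact hLip _ (hγs t (Ico_subset_Icc_self ht)) x hx
      _ = M * ‖v‖ ^ 2 * t := by rw [hγx]; ring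
  have key := norm_image_one_sub_image_zero_le_of_norm_deriv_le_mul hderiv bound
  have hend : K (γ 1) - (1 : ℝ) • DK x v - (K (γ 0) - (0 : ℝ) • DK x v)
      = K x' - K x - DK x (x' - x) := by
    simp only [γ, v, one_smul, zero_smul, add_zero, add_sub_cancel, sub_zero]
    abel
  rw [hend] at key
  linarith

theorem Convex.image_sub_sub_fderiv_eq_zero_of_fderiv_eq {s : Set E} (hs : Convex ℝ s)
    {K : E → F} {DK : E → E →L[ℝ] F} (hK : ∀ x ∈ s, HasFDerivWithinAt K (DK x) s x)
    (hconst : ∀ x ∈ s, ∀ x' ∈ s, DK x = DK x') {x x' : E} (hx : x ∈ s) (hx' : x' ∈ s) :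
    K x' - K x - DK x (x' - x) = 0 := by
  have h := hs.norm_image_sub_sub_fderiv_le hK (M := 0)
    (fun z hz z' hz' => by simp [hconst z hz z' hz']) hx hx'
  simpa using h

end Taylor

theorem LinearMap.IsSymmetric.real_inner_le_norm_mul_norm_apply {Y : Type*}
    [NormedAddCommGroup Y] [InnerProductSpace ℝ Y] {T : Y →ₗ[ℝ] Y} (hT : T.IsSymmetric)
    {u : Y} (hu : T u = u) (y : Y) :
    ⟪u, y⟫ ≤ ‖u‖ * ‖T y‖ := by
  calc ⟪u, y⟫ = ⟪u, T y⟫ := by rw [← hT, hu]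
    _ ≤ ‖u‖ * ‖T y‖ := real_inner_le_norm u (T y)

theorem stmt0_general {X Y : Type*}
    [NormedAddCommGroup X] [InnerProductSpace ℝ X]
    [NormedAddCommGroup Y] [InnerProductSpace ℝ Y]
    (𝒳 : Set X) (hconv : Convex ℝ 𝒳)
    (K : X → Y) (DK : X → X →L[ℝ] Y)
    (hdiff : ∀ x ∈ 𝒳, HasFDerivWithinAt K (DK x) 𝒳 x)
    (L : ℝ)
    (hLip : ∀ x ∈ 𝒳, ∀ x' ∈ 𝒳, ‖DK x - DK x'‖ ≤ L * ‖x - x'‖)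
    (P : Y →L[ℝ] Y)
    (hPsa : ∀ u v : Y, ⟪P u, v⟫ = ⟪u, P v⟫)
    (hPconst : ∀ x ∈ 𝒳, ∀ x' ∈ 𝒳,
      (ContinuousLinearMap.id ℝ Y - P).comp (DK x)
        = (ContinuousLinearMap.id ℝ Y - P).comp (DK x')) :
    ∀ x ∈ 𝒳, ∀ x' ∈ 𝒳, ∀ y : Y,
      ⟪K x' - K x - DK x (x' - x), y⟫ ≤ (L / 2) * ‖x - x'‖ ^ 2 * ‖P y‖ := by
  intro x hx x' hx' y
  set Q := ContinuousLinearMap.id ℝ Y - P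
  set Δ := K x' - K x - DK x (x' - x)
  have hQΔ : Q Δ = 0 := by
    have h := hconv.image_sub_sub_fderiv_eq_zero_of_fderiv_eq
      (fun z hz => Q.hasFDerivAt.comp_hasFDerivWithinAt z (hdiff z hz)) hPconst hx hx'
    simpa [Δ] using h
  have hPΔ : P Δ = Δ := (sub_eq_zero.1 hQΔ).symm
  calc ⟪Δ, y⟫ ≤ ‖Δ‖ * ‖P y‖ :=
        LinearMap.IsSymmetric.real_inner_le_norm_mul_norm_apply (T := (P : Y →ₗ[ℝ] Y)) hPsa hPΔ y
    _ ≤ L / 2 * ‖x' - x‖ ^ 2 * ‖P y‖ := by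
        gcongr; exact hconv.norm_image_sub_sub_fderiv_le hdiff hLip hx hx'
    _ = L / 2 * ‖x - x'‖ ^ 2 * ‖P y‖ := by rw [norm_sub_rev]

/-- Consequence of the Lipschitz differentiability of `K` on `𝒳` (with `(id - P) ∘ ∇K`
constant on `𝒳`): a second-order Taylor-type estimate tested against `y`. -/
theorem stmt0 {X Y : Type*}
    [NormedAddCommGroup X] [InnerProductSpace ℝ X] [CompleteSpace X]
    [NormedAddCommGroup Y] [InnerProductSpace ℝ Y] [CompleteSpace Y]
    (𝒳 : Set X) (hconv : Convex ℝ 𝒳)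
    (K : X → Y) (DK : X → X →L[ℝ] Y)
    (hdiff : ∀ x ∈ 𝒳, HasFDerivWithinAt K (DK x) 𝒳 x)
    (L : ℝ) (hL : 0 ≤ L)
    (hLip : ∀ x ∈ 𝒳, ∀ x' ∈ 𝒳, ‖DK x - DK x'‖ ≤ L * ‖x - x'‖)
    (P : Y →L[ℝ] Y)
    (hPsa : ∀ u v : Y, ⟪P u, v⟫ = ⟪u, P v⟫)
    (hPidem : P.comp P = P)
    (hPconst : ∀ x ∈ 𝒳, ∀ x' ∈ 𝒳,
      (ContinuousLinearMap.id ℝ Y - P).comp (DK x)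
        = (ContinuousLinearMap.id ℝ Y - P).comp (DK x')) :
    ∀ x ∈ 𝒳, ∀ x' ∈ 𝒳, ∀ y : Y,
      ⟪K x' - K x - DK x (x' - x), y⟫ ≤ (L / 2) * ‖x - x'‖ ^ 2 * ‖P y‖ :=
  stmt0_general 𝒳 hconv K DK hdiff L hLip P hPsa hPconst
end

section
/- If u, u⁺ ∈ U and w ∈ H(u⁺) satisfy the implicit proximal point step 0 = w + τ⁻¹(u⁺ − u), then ((1 + 2γτ)/2)·‖u⁺ − u*‖² + (1/2)·‖u⁺ − u‖² ≤ (1/2)·‖u − u*‖². -/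
open scoped RealInnerProductSpace

section ProximalPoint

variable {U : Type*} [NormedAddCommGroup U] [InnerProductSpace ℝ U]

theorem two_mul_real_inner_sub_sub_eq (x y z : U) :
    2 * ⟪y - x, x - z⟫ = ‖y - z‖ ^ 2 - ‖x - z‖ ^ 2 - ‖x - y‖ ^ 2 := by
  have hsplit : y - z = (x - z) - (x - y) := by abel
  rw [hsplit, norm_sub_sq_real, real_inner_comm, ← neg_sub x y, inner_neg_right]
  ring

theorem eq_smul_sub_of_zero_eq_add_smul {τ : ℝ} {u x w : U}
    (hstep : (0 : U) = w + τ⁻¹ • (x - u)) : w = τ⁻¹ • (u - x) := by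
  rw [← neg_sub x u, smul_neg, ← add_eq_zero_iff_eq_neg, hstep]

theorem descent_of_strongly_monotone_step {γ τ : ℝ} (hτ : 0 < τ) {u x z : U}
    (hmono : γ * ‖x - z‖ ^ 2 ≤ ⟪τ⁻¹ • (u - x), x - z⟫) :
    ((1 + 2 * γ * τ) / 2) * ‖x - z‖ ^ 2 + (1 / 2) * ‖x - u‖ ^ 2 ≤ (1 / 2) * ‖u - z‖ ^ 2 := by
  rw [real_inner_smul_left, le_inv_mul_iff₀ hτ] at hmono
  have hpol := two_mul_real_inner_sub_sub_eq x u z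
  linarith

end ProximalPoint

theorem stmt1_general {U : Type*} [NormedAddCommGroup U] [InnerProductSpace ℝ U]
    (H : U → Set U) (γ τ : ℝ) (hτ : 0 < τ) (ustar : U)
    (hmono : ∀ u : U, ∀ w ∈ H u, γ * ‖u - ustar‖ ^ 2 ≤ ⟪w, u - ustar⟫)
    (u uplus w : U) (hw : w ∈ H uplus)
    (hstep : (0 : U) = w + τ⁻¹ • (uplus - u)) :
    ((1 + 2 * γ * τ) / 2) * ‖uplus - ustar‖ ^ 2 + (1 / 2) * ‖uplus - u‖ ^ 2
      ≤ (1 / 2) * ‖u - ustar‖ ^ 2 := by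
  rw [eq_smul_sub_of_zero_eq_add_smul hstep] at hw
  exact descent_of_strongly_monotone_step hτ (hmono uplus _ hw)

/-- A single implicit proximal-point step on a `γ`-strongly monotone (at `ustar` for `0`)
set-valued operator `H` satisfies the descent inequality. -/
theorem stmt1 {U : Type*} [NormedAddCommGroup U] [InnerProductSpace ℝ U]
    (H : U → Set U) (γ τ : ℝ) (hγ : 0 ≤ γ) (hτ : 0 < τ) (ustar : U)
    (hmono : ∀ u : U, ∀ w ∈ H u, γ * ‖u - ustar‖ ^ 2 ≤ ⟪w, u - ustar⟫)
    (u uplus w : U) (hw : w ∈ H uplus)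
    (hstep : (0 : U) = w + τ⁻¹ • (uplus - u)) :
    ((1 + 2 * γ * τ) / 2) * ‖uplus - ustar‖ ^ 2 + (1 / 2) * ‖uplus - u‖ ^ 2
      ≤ (1 / 2) * ‖u - ustar‖ ^ 2 :=
  stmt1_general H γ τ hτ ustar hmono u uplus w hw hstep
end

section
/- If (u^i)_{i∈ℕ} ⊆ U is a sequence such that for every i there exists w^{i+1} ∈ H(u^{i+1}) with 0 = w^{i+1} + τ⁻¹(u^{i+1} − u^i), then for every N ∈ ℕ one has ‖u^N − u*‖² ≤ (1 + 2γτ)^{−N}·‖u^0 − u*‖²; in particular, when γ > 0 the iterates converge to u* at a linear rate. -/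
open scoped RealInnerProductSpace

/-!
A proximal step `u⁺ = u - τ w`, `w ∈ H u⁺`, moves `u` by `u - u⁺ = τ w`, and strong monotonicity
makes this displacement point away from `u*` by at least `γ τ ‖u⁺ - u*‖²`. Expanding
`‖u - u*‖² = ‖(u⁺ - u*) + (u - u⁺)‖²` gives `(1 + 2γτ) ‖u⁺ - u*‖² ≤ ‖u - u*‖²`, and iterating this
one-step contraction yields the geometric rate.
-/

theorem one_add_two_mul_mul_norm_sub_sq_le_of_proximal_step {U : Type*} [NormedAddCommGroup U]
    [InnerProductSpace ℝ U] {γ τ : ℝ} (hτ : 0 < τ) {x v w ustar : U}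
    (hmono : γ * ‖v - ustar‖ ^ 2 ≤ ⟪w, v - ustar⟫) (hstep : w + τ⁻¹ • (v - x) = 0) :
    (1 + 2 * γ * τ) * ‖v - ustar‖ ^ 2 ≤ ‖x - ustar‖ ^ 2 := by
  have hdisp : x - v = τ • w := by
    rw [eq_neg_of_add_eq_zero_left hstep, smul_neg, smul_inv_smul₀ hτ.ne', neg_sub]
  have hinner : γ * τ * ‖v - ustar‖ ^ 2 ≤ ⟪v - ustar, x - v⟫ := by
    rw [real_inner_comm, hdisp, real_inner_smul_left]
    nlinarith [mul_le_mul_of_nonneg_left hmono hτ.le]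
  calc (1 + 2 * γ * τ) * ‖v - ustar‖ ^ 2
      ≤ ‖v - ustar‖ ^ 2 + 2 * ⟪v - ustar, x - v⟫ + ‖x - v‖ ^ 2 := by
        nlinarith [sq_nonneg ‖x - v‖]
    _ = ‖x - ustar‖ ^ 2 := by rw [← norm_add_sq_real, sub_add_sub_cancel']

theorem le_inv_pow_mul_of_forall_mul_succ_le {c : ℝ} (hc : 0 < c) {e : ℕ → ℝ}
    (h : ∀ i, c * e (i + 1) ≤ e i) (N : ℕ) : e N ≤ (c ^ N)⁻¹ * e 0 := by
  suffices hpow : c ^ N * e N ≤ e 0 by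
    rwa [le_inv_mul_iff₀ (pow_pos hc N)]
  induction N with
  | zero => simp
  | succ n ih =>
    calc c ^ (n + 1) * e (n + 1) = c ^ n * (c * e (n + 1)) := by ring
      _ ≤ c ^ n * e n := mul_le_mul_of_nonneg_left (h n) (pow_nonneg hc.le n)
      _ ≤ e 0 := ih

/-- The proximal-point iterates of a `γ`-strongly monotone (at `ustar` for `0`) set-valued
operator `H` converge to `ustar` at the linear rate `O(1/(1+2γτ)^N)`. -/
theorem stmt2 {U : Type*} [NormedAddCommGroup U] [InnerProductSpace ℝ U]
    (H : U → Set U) (γ τ : ℝ) (hγ : 0 ≤ γ) (hτ : 0 < τ) (ustar : U)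
    (hmono : ∀ u : U, ∀ w ∈ H u, γ * ‖u - ustar‖ ^ 2 ≤ ⟪w, u - ustar⟫)
    (u : ℕ → U)
    (hstep : ∀ i : ℕ, ∃ w ∈ H (u (i + 1)), (0 : U) = w + τ⁻¹ • (u (i + 1) - u i)) :
    ∀ N : ℕ, ‖u N - ustar‖ ^ 2 ≤ ((1 + 2 * γ * τ) ^ N)⁻¹ * ‖u 0 - ustar‖ ^ 2 := by
  refine le_inv_pow_mul_of_forall_mul_succ_le (by positivity) fun i => ?_
  obtain ⟨w, hw, hzero⟩ := hstep i
  exact one_add_two_mul_mul_norm_sub_sq_le_of_proximal_step hτ (hmono _ w hw) hzero.symm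
end

section
/- If for every i = 0,…,N−1 the expected fundamental condition holds: ∫_Ω ⟨Z_{i+1}(ω)W_{i+1}(ω)h^{i+1}(ω), u^{i+1}(ω) − u*⟩ dμ(ω) ≥ ∫_Ω [ (1/2)⟨(C_{i+2}(ω) − C_{i+1}(ω))(u^{i+1}(ω) − u*), u^{i+1}(ω) − u*⟩ − (1/2)⟨C_{i+1}(ω)(u^{i+1}(ω) − u^i(ω)), u^{i+1}(ω) − u^i(ω)⟩ ] dμ(ω), then the expected descent inequality holds: ∫_Ω (1/2)⟨C_{N+1}(ω)(u^N(ω) − u*), u^N(ω) − u*⟩ dμ(ω) ≤ ∫_Ω (1/2)⟨C_1(ω)(u^0(ω) − u*), u^0(ω) − u*⟩ dμ(ω). -/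
/-!
The implicit step gives `Z W h = -C (u⁺ - u)` with `C = Z M` self-adjoint, so the three-point
identity turns the left-hand side of the fundamental condition pointwise into
`½‖u - u*‖²_C - ½‖u⁺ - u*‖²_C - ½‖u⁺ - u‖²_C`. After integration the terms in `C(u⁺ - u*)` and
`C(u⁺ - u)` cancel against the right-hand side, leaving the one-step descent
`∫ ½‖u⁺ - u*‖²_{C'} ≤ ∫ ½‖u - u*‖²_C`, which telescopes.
-/

open scoped RealInnerProductSpace
open MeasureTheory

section

variable {U : Type*} [NormedAddCommGroup U] [InnerProductSpace ℝ U]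

theorem LinearMap.IsSymmetric.inner_sub_three_point {T : U →ₗ[ℝ] U} (hT : T.IsSymmetric)
    (x y z : U) :
    ⟪T (x - y), x - z⟫ = (1 / 2) * ⟪T (x - z), x - z⟫ - (1 / 2) * ⟪T (y - z), y - z⟫
      + (1 / 2) * ⟪T (x - y), x - y⟫ := by
  rw [show x - y = (x - z) - (y - z) by abel]
  generalize x - z = a
  generalize y - z = b
  have hsym : ⟪T a, b⟫ = ⟪T b, a⟫ := by rw [hT, real_inner_comm]
  simp only [map_sub, inner_sub_left, inner_sub_right]
  linarith

theorem inner_implicit_step_eq {C Z W M : U →L[ℝ] U} (hC : (C : U →ₗ[ℝ] U).IsSymmetric)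
    (hCZM : C = Z.comp M) {h u u' ustar : U} (hstep : 0 = W h + M (u' - u)) :
    ⟪Z (W h), u' - ustar⟫ = (1 / 2) * ⟪C (u - ustar), u - ustar⟫
      - (1 / 2) * ⟪C (u' - ustar), u' - ustar⟫ - (1 / 2) * ⟪C (u' - u), u' - u⟫ := by
  have hZWh : Z (W h) = -C (u' - u) := by
    rw [eq_neg_of_add_eq_zero_left hstep.symm, map_neg, hCZM, ContinuousLinearMap.comp_apply]
  rw [hZWh, inner_neg_left, ← ContinuousLinearMap.coe_coe, hC.inner_sub_three_point]
  simp only [ContinuousLinearMap.coe_coe]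
  ring

variable {Ω : Type*} [MeasurableSpace Ω] {μ : Measure Ω}

theorem integral_le_integral_of_integral_sub_le {f g k : Ω → ℝ} (hf : Integrable f μ)
    (hg : Integrable g μ) (hk : Integrable k μ)
    (h : ∫ ω, f ω - k ω ∂μ ≤ ∫ ω, g ω - k ω ∂μ) :
    ∫ ω, f ω ∂μ ≤ ∫ ω, g ω ∂μ := by
  rw [integral_sub hf hk, integral_sub hg hk] at h
  linarith

theorem integral_half_inner_le_of_fundamental {C C' Z W M : Ω → U →L[ℝ] U} {h u u' : Ω → U}
    {ustar : U} (hC : ∀ᵐ ω ∂μ, (C ω : U →ₗ[ℝ] U).IsSymmetric)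
    (hCZM : ∀ᵐ ω ∂μ, C ω = (Z ω).comp (M ω))
    (hstep : ∀ᵐ ω ∂μ, (0 : U) = W ω (h ω) + M ω (u' ω - u ω))
    (hI : Integrable (fun ω => ⟪C ω (u ω - ustar), u ω - ustar⟫) μ)
    (hI' : Integrable (fun ω => ⟪C' ω (u' ω - ustar), u' ω - ustar⟫) μ)
    (hIC : Integrable (fun ω => ⟪C ω (u' ω - ustar), u' ω - ustar⟫) μ)
    (hIstep : Integrable (fun ω => ⟪C ω (u' ω - u ω), u' ω - u ω⟫) μ)
    (hfund : ∫ ω, ⟪Z ω (W ω (h ω)), u' ω - ustar⟫ ∂μ ≥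
      ∫ ω, ((1 / 2) * ⟪(C' ω - C ω) (u' ω - ustar), u' ω - ustar⟫
        - (1 / 2) * ⟪C ω (u' ω - u ω), u' ω - u ω⟫) ∂μ) :
    ∫ ω, (1 / 2) * ⟪C' ω (u' ω - ustar), u' ω - ustar⟫ ∂μ ≤
      ∫ ω, (1 / 2) * ⟪C ω (u ω - ustar), u ω - ustar⟫ ∂μ := by
  refine integral_le_integral_of_integral_sub_le (hI'.const_mul _) (hI.const_mul _)
    ((hIC.const_mul (1 / 2)).add (hIstep.const_mul (1 / 2))) ?_
  have hlhs : (fun ω => ⟪Z ω (W ω (h ω)), u' ω - ustar⟫) =ᵐ[μ] fun ω =>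
      (1 / 2) * ⟪C ω (u ω - ustar), u ω - ustar⟫ - ((1 / 2) * ⟪C ω (u' ω - ustar), u' ω - ustar⟫
        + (1 / 2) * ⟪C ω (u' ω - u ω), u' ω - u ω⟫) := by
    filter_upwards [hC, hCZM, hstep] with ω hCω hCZMω hstepω
    rw [inner_implicit_step_eq hCω hCZMω hstepω]
    ring
  have hrhs : (fun ω => (1 / 2) * ⟪(C' ω - C ω) (u' ω - ustar), u' ω - ustar⟫
        - (1 / 2) * ⟪C ω (u' ω - u ω), u' ω - u ω⟫) = fun ω =>
      (1 / 2) * ⟪C' ω (u' ω - ustar), u' ω - ustar⟫ - ((1 / 2) * ⟪C ω (u' ω - ustar), u' ω - ustar⟫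
        + (1 / 2) * ⟪C ω (u' ω - u ω), u' ω - u ω⟫) := by
    funext ω
    simp only [sub_apply, inner_sub_left]
    ring
  rwa [integral_congr_ae hlhs, hrhs] at hfund

end

theorem stmt3_general {U : Type*} [NormedAddCommGroup U] [InnerProductSpace ℝ U]
    {Ω : Type*} [MeasurableSpace Ω] (μ : Measure Ω)
    (N : ℕ) (ustar : U)
    (u : ℕ → Ω → U)
    (C Z W M : ℕ → Ω → U →L[ℝ] U) (h : ℕ → Ω → U)
    (hCsa : ∀ i ≤ N, ∀ᵐ ω ∂μ, ∀ v v' : U, ⟪C (i + 1) ω v, v'⟫ = ⟪v, C (i + 1) ω v'⟫)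
    (hCZM : ∀ i < N, ∀ ω : Ω, C (i + 1) ω = (Z (i + 1) ω).comp (M (i + 1) ω))
    (hstep : ∀ i < N, ∀ᵐ ω ∂μ,
      (0 : U) = W (i + 1) ω (h (i + 1) ω) + M (i + 1) ω (u (i + 1) ω - u i ω))
    (hI1 : ∀ i ≤ N, Integrable (fun ω => ⟪C (i + 1) ω (u i ω - ustar), u i ω - ustar⟫) μ)
    (hI2 : ∀ i < N,
      Integrable (fun ω => ⟪C (i + 1) ω (u (i + 1) ω - ustar), u (i + 1) ω - ustar⟫) μ)
    (hI3 : ∀ i < N,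
      Integrable (fun ω => ⟪C (i + 1) ω (u (i + 1) ω - u i ω), u (i + 1) ω - u i ω⟫) μ)
    (hfund : ∀ i < N,
      ∫ ω, ⟪Z (i + 1) ω (W (i + 1) ω (h (i + 1) ω)), u (i + 1) ω - ustar⟫ ∂μ ≥
        ∫ ω, ((1 / 2) * ⟪(C (i + 2) ω - C (i + 1) ω) (u (i + 1) ω - ustar),
                u (i + 1) ω - ustar⟫
              - (1 / 2) * ⟪C (i + 1) ω (u (i + 1) ω - u i ω), u (i + 1) ω - u i ω⟫) ∂μ) :
    ∫ ω, (1 / 2) * ⟪C (N + 1) ω (u N ω - ustar), u N ω - ustar⟫ ∂μ ≤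
      ∫ ω, (1 / 2) * ⟪C 1 ω (u 0 ω - ustar), u 0 ω - ustar⟫ ∂μ := by
  set E : ℕ → ℝ := fun n => ∫ ω, (1 / 2) * ⟪C (n + 1) ω (u n ω - ustar), u n ω - ustar⟫ ∂μ
  have hdescent : ∀ i < N, E (i + 1) ≤ E i := fun i hi =>
    integral_half_inner_le_of_fundamental (hCsa i hi.le) (.of_forall (hCZM i hi)) (hstep i hi)
      (hI1 i hi.le) (hI1 (i + 1) hi) (hI2 i hi) (hI3 i hi) (hfund i hi)
  have htelescope : ∀ n ≤ N, E n ≤ E 0 := by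
    intro n hn
    induction n with
    | zero => exact le_rfl
    | succ n ih => exact (hdescent n hn).trans (ih (Nat.le_of_succ_le hn))
  exact htelescope N le_rfl

/-- Stochastic testing theorem: if the expected fundamental condition holds on each of the
first `N` steps of the implicitly-defined algorithm, then the expected descent inequality
holds at iteration `N`. -/
theorem stmt3 {U : Type*} [NormedAddCommGroup U] [InnerProductSpace ℝ U]
    {Ω : Type*} [MeasurableSpace Ω] (μ : Measure Ω) [IsProbabilityMeasure μ]
    (N : ℕ) (hN : 1 ≤ N) (ustar : U)
    (u : ℕ → Ω → U) (hu : ∀ i ≤ N, StronglyMeasurable (u i))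
    (C Z W M : ℕ → Ω → U →L[ℝ] U) (h : ℕ → Ω → U)
    (hCsa : ∀ i ≤ N, ∀ᵐ ω ∂μ, ∀ v v' : U, ⟪C (i + 1) ω v, v'⟫ = ⟪v, C (i + 1) ω v'⟫)
    (hCZM : ∀ i < N, ∀ ω : Ω, C (i + 1) ω = (Z (i + 1) ω).comp (M (i + 1) ω))
    (hstep : ∀ i < N, ∀ᵐ ω ∂μ,
      (0 : U) = W (i + 1) ω (h (i + 1) ω) + M (i + 1) ω (u (i + 1) ω - u i ω))
    (hI1 : ∀ i ≤ N, Integrable (fun ω => ⟪C (i + 1) ω (u i ω - ustar), u i ω - ustar⟫) μ)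
    (hI2 : ∀ i < N,
      Integrable (fun ω => ⟪C (i + 1) ω (u (i + 1) ω - ustar), u (i + 1) ω - ustar⟫) μ)
    (hI3 : ∀ i < N,
      Integrable (fun ω => ⟪C (i + 1) ω (u (i + 1) ω - u i ω), u (i + 1) ω - u i ω⟫) μ)
    (hI4 : ∀ i < N,
      Integrable (fun ω => ⟪Z (i + 1) ω (W (i + 1) ω (h (i + 1) ω)), u (i + 1) ω - ustar⟫) μ)
    (hfund : ∀ i < N,
      ∫ ω, ⟪Z (i + 1) ω (W (i + 1) ω (h (i + 1) ω)), u (i + 1) ω - ustar⟫ ∂μ ≥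
        ∫ ω, ((1 / 2) * ⟪(C (i + 2) ω - C (i + 1) ω) (u (i + 1) ω - ustar),
                u (i + 1) ω - ustar⟫
              - (1 / 2) * ⟪C (i + 1) ω (u (i + 1) ω - u i ω), u (i + 1) ω - u i ω⟫) ∂μ) :
    ∫ ω, (1 / 2) * ⟪C (N + 1) ω (u N ω - ustar), u N ω - ustar⟫ ∂μ ≤
      ∫ ω, (1 / 2) * ⟪C 1 ω (u 0 ω - ustar), u 0 ω - ustar⟫ ∂μ :=
  stmt3_general μ N ustar u C Z W M h hCsa hCZM hstep hI1 hI2 hI3 hfund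
end

section
/- Suppose that for every ℓ = 1,…,n, (1 − κ)·ψ_ℓ ≥ ‖Σ_{j=1}^m |λ_{ℓ,j}|·√(w_{j,ℓ}/φ_j)·Q_ℓ K' P_j‖² (operator norm). Then for all x ∈ X and y ∈ Y, ⟨Φx, x⟩ − 2⟨Λx, y⟩ + ⟨Ψy, y⟩ ≥ δ⟨Φx, x⟩ + ((κ − δ)/(1 − δ))·⟨Ψy, y⟩; that is, the block operator Z M = [[Φ, −Λ*],[−Λ, Ψ]] on X × Y is bounded below by diag(δΦ, ((κ−δ)/(1−δ))Ψ) in the positive-semidefinite order. -/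
open scoped RealInnerProductSpace Classical

/-!
Write `A_{jℓ} = Q_ℓ K' P_j` and `g_j = ∑_ℓ λ_{ℓj} A_{jℓ}^* y`, so that
`⟪Λ x, y⟫ = ∑_j ⟪P_j x, g_j⟫`.
Young's inequality in each block gives
`2 ⟪Λ x, y⟫ ≤ (1 - δ) ⟪Φ x, x⟫ + (1 - δ)⁻¹ ∑_j ‖g_j‖² / φ_j`,
so it suffices that `∑_j ‖g_j‖² / φ_j ≤ (1 - κ) ⟪Ψ y, y⟫`.

In `‖g_j‖²` the cross term of the blocks `ℓ, k` vanishes unless `A_{jℓ} A_{jk}^* ≠ 0`, and the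
others are split by Young's inequality with the reciprocal weights `w_{j,ℓ,k}`, `w_{j,k,ℓ}`; this
gives `‖g_j‖² ≤ ∑_ℓ λ_{ℓj}² w_{j,ℓ} ‖A_{jℓ}^* y‖²`. After exchanging the sums over `j` and `ℓ`,
orthogonality of the `P_j` makes the inner sum `‖T_ℓ^* Q_ℓ y‖²`, where `T_ℓ` is the operator of
the step-length condition, and this is at most `(1 - κ) ψ_ℓ ‖Q_ℓ y‖²`.
-/

open ContinuousLinearMap Finset

section InnerProductSpace

variable {E : Type*} [NormedAddCommGroup E] [InnerProductSpace ℝ E]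

theorem two_mul_inner_le_div_add_mul_sq (u v : E) {t : ℝ} (ht : 0 < t) :
    2 * ⟪u, v⟫ ≤ ‖u‖ ^ 2 / t + t * ‖v‖ ^ 2 := by
  have hsq : 0 ≤ (‖u‖ - t * ‖v‖) ^ 2 / t := by positivity
  have hexp : (‖u‖ - t * ‖v‖) ^ 2 / t = ‖u‖ ^ 2 / t + t * ‖v‖ ^ 2 - 2 * (‖u‖ * ‖v‖) := by
    field_simp
    ring
  linarith [real_inner_le_norm u v]

theorem norm_sum_smul_sq_le_weighted {ι : Type*} [Fintype ι] (v : ι → E) (a : ι → ℝ)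
    (S : ι → ι → Prop) [DecidableRel S] (hS : ∀ ℓ k, S ℓ k → S k ℓ)
    (hv : ∀ ℓ k, ¬S ℓ k → ⟪v ℓ, v k⟫ = 0)
    (w : ι → ι → ℝ) (hw : ∀ ℓ k, 0 < w ℓ k) (hwsymm : ∀ ℓ k, w ℓ k = 1 / w k ℓ) :
    ‖∑ ℓ, a ℓ • v ℓ‖ ^ 2 ≤
      ∑ ℓ, a ℓ ^ 2 * (∑ k, if S ℓ k ∧ a k ≠ 0 then w ℓ k else 0) * ‖v ℓ‖ ^ 2 := by
  set c : ι → ι → ℝ := fun ℓ k => if S ℓ k ∧ a k ≠ 0 then w ℓ k * ‖a ℓ • v ℓ‖ ^ 2 else 0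
  have hc : ∀ ℓ k, 0 ≤ c ℓ k := fun ℓ k => by
    simp only [c]
    split_ifs
    exacts [mul_nonneg (hw ℓ k).le (sq_nonneg _), le_rfl]
  have hpair : ∀ ℓ k, 2 * ⟪a ℓ • v ℓ, a k • v k⟫ ≤ c ℓ k + c k ℓ := by
    intro ℓ k
    by_cases h : S ℓ k ∧ a ℓ ≠ 0 ∧ a k ≠ 0
    · have hcℓk : c ℓ k = ‖a ℓ • v ℓ‖ ^ 2 / w k ℓ := by
        simp only [c, if_pos (And.intro h.1 h.2.2), hwsymm ℓ k]
        ring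
      have hckℓ : c k ℓ = w k ℓ * ‖a k • v k‖ ^ 2 := if_pos ⟨hS ℓ k h.1, h.2.1⟩
      rw [hcℓk, hckℓ]
      exact two_mul_inner_le_div_add_mul_sq _ _ (hw k ℓ)
    · have h0 : ⟪a ℓ • v ℓ, a k • v k⟫ = 0 := by
        rw [real_inner_smul_left, real_inner_smul_right]
        by_cases hs : S ℓ k
        · have ha : a ℓ = 0 ∨ a k = 0 := by tauto
          rcases ha with ha | ha <;> simp [ha]
        · simp [hv ℓ k hs]
      linarith [hc ℓ k, hc k ℓ]
  calc ‖∑ ℓ, a ℓ • v ℓ‖ ^ 2 = ∑ ℓ, ∑ k, ⟪a ℓ • v ℓ, a k • v k⟫ := by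
        rw [← real_inner_self_eq_norm_sq, sum_inner]
        simp_rw [inner_sum]
    _ ≤ ∑ ℓ, ∑ k, (c ℓ k + c k ℓ) / 2 := by
        gcongr with ℓ _ k _
        linarith [hpair ℓ k]
    _ = ∑ ℓ, ∑ k, c ℓ k := by
        simp_rw [add_div, sum_add_distrib]
        rw [sum_comm (f := fun ℓ k => c k ℓ / 2), ← sum_add_distrib]
        simp_rw [← sum_add_distrib, add_halves]
    _ = _ := by
        refine sum_congr rfl fun ℓ _ => ?_
        rw [mul_sum, sum_mul]
        refine sum_congr rfl fun k _ => ?_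
        simp only [c, norm_smul, mul_pow, Real.norm_eq_abs, sq_abs]
        split_ifs <;> ring

theorem inner_apply_self_eq_norm_sq {P : E →L[ℝ] E} (hsa : ∀ u v : E, ⟪P u, v⟫ = ⟪u, P v⟫)
    (hidem : P.comp P = P) (x : E) : ⟪P x, x⟫ = ‖P x‖ ^ 2 := by
  rw [← real_inner_self_eq_norm_sq, ← hsa, ← comp_apply, hidem]

theorem inner_sum_smul_apply_self {ι : Type*} [Fintype ι] (P : ι → E →L[ℝ] E)
    (hsa : ∀ j, ∀ u v : E, ⟪P j u, v⟫ = ⟪u, P j v⟫) (hidem : ∀ j, (P j).comp (P j) = P j)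
    (φ : ι → ℝ) (x : E) : ⟪(∑ j, φ j • P j) x, x⟫ = ∑ j, φ j * ‖P j x‖ ^ 2 := by
  simp only [_root_.sum_apply, smul_apply, sum_inner, real_inner_smul_left,
    inner_apply_self_eq_norm_sq (hsa _) (hidem _)]

theorem norm_sum_smul_apply_sq_of_orthogonal {ι : Type*} [Fintype ι] (P : ι → E →L[ℝ] E)
    (hsa : ∀ j, ∀ u v : E, ⟪P j u, v⟫ = ⟪u, P j v⟫)
    (horth : ∀ j j', j ≠ j' → (P j).comp (P j') = 0) (c : ι → ℝ) (z : E) :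
    ‖∑ j, c j • P j z‖ ^ 2 = ∑ j, c j ^ 2 * ‖P j z‖ ^ 2 := by
  rw [← real_inner_self_eq_norm_sq, sum_inner]
  refine sum_congr rfl fun j _ => ?_
  rw [inner_sum, sum_eq_single j]
  · rw [real_inner_smul_left, real_inner_smul_right, real_inner_self_eq_norm_sq]
    ring
  · intro j' _ hj'
    rw [real_inner_smul_left, real_inner_smul_right, hsa, ← comp_apply, horth j j' hj'.symm]
    simp
  · simp

theorem two_mul_sum_inner_le {ι : Type*} [Fintype ι] (u v : ι → E) {φ : ι → ℝ}
    (hφ : ∀ j, 0 < φ j) {t : ℝ} (ht : 0 < t) :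
    2 * ∑ j, ⟪u j, v j⟫ ≤ t * ∑ j, φ j * ‖u j‖ ^ 2 + (∑ j, ‖v j‖ ^ 2 / φ j) / t := by
  rw [mul_sum, mul_sum, sum_div, ← sum_add_distrib]
  refine sum_le_sum fun j _ => ?_
  have h := two_mul_inner_le_div_add_mul_sq (v j) (u j) (mul_pos ht (hφ j))
  rw [real_inner_comm]
  calc 2 * ⟪v j, u j⟫ ≤ _ := h
    _ = _ := by field_simp; ring

end InnerProductSpace

section HilbertSpace

variable {X Y : Type*} [NormedAddCommGroup X] [InnerProductSpace ℝ X] [CompleteSpace X]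
  [NormedAddCommGroup Y] [InnerProductSpace ℝ Y] [CompleteSpace Y]

theorem norm_sum_smul_adjoint_apply_sq_le {ι : Type*} [Fintype ι] (A : ι → X →L[ℝ] Y)
    (a : ι → ℝ) (w : ι → ι → ℝ) (hw : ∀ ℓ k, 0 < w ℓ k) (hwsymm : ∀ ℓ k, w ℓ k = 1 / w k ℓ)
    (y : Y) :
    ‖∑ ℓ, a ℓ • adjoint (A ℓ) y‖ ^ 2 ≤
      ∑ ℓ, a ℓ ^ 2 * (∑ k, if (A ℓ).comp (adjoint (A k)) ≠ 0 ∧ a k ≠ 0 then w ℓ k else 0) *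
        ‖adjoint (A ℓ) y‖ ^ 2 := by
  refine norm_sum_smul_sq_le_weighted (fun ℓ => adjoint (A ℓ) y) a
    (fun ℓ k => (A ℓ).comp (adjoint (A k)) ≠ 0) (fun ℓ k h h' => h ?_) (fun ℓ k h => ?_) w hw hwsymm
  · rw [← adjoint_adjoint ((A ℓ).comp (adjoint (A k))), adjoint_comp, adjoint_adjoint, h',
      map_zero]
  · rw [adjoint_inner_left, ← comp_apply, not_not.mp h, zero_apply, inner_zero_right]

theorem inner_sum_sum_smul_apply {ι κ : Type*} [Fintype ι] [Fintype κ] (P : κ → X →L[ℝ] X)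
    (B : ι → κ → X →L[ℝ] Y) (hB : ∀ ℓ j, (B ℓ j).comp (P j) = B ℓ j) (lam : ι → κ → ℝ)
    (x : X) (y : Y) :
    ⟪(∑ ℓ, ∑ j, lam ℓ j • B ℓ j) x, y⟫ = ∑ j, ⟪P j x, ∑ ℓ, lam ℓ j • adjoint (B ℓ j) y⟫ := by
  simp only [_root_.sum_apply, smul_apply, sum_inner, inner_sum, real_inner_smul_left,
    real_inner_smul_right, adjoint_inner_right, ← comp_apply (B _ _) (P _), hB]
  exact sum_comm

theorem norm_sum_smul_adjoint_block_sq_le_wtot {κ : Type*} [Fintype κ] {P : X →L[ℝ] X}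
    (hPsa : ∀ u v : X, ⟪P u, v⟫ = ⟪u, P v⟫) (hPidem : P.comp P = P) (Q : κ → Y →L[ℝ] Y)
    (hQsa : ∀ ℓ, ∀ u v : Y, ⟪Q ℓ u, v⟫ = ⟪u, Q ℓ v⟫) (K' : X →L[ℝ] Y) (a : κ → ℝ)
    (w : κ → κ → ℝ) (hw : ∀ ℓ k, 0 < w ℓ k) (hwsymm : ∀ ℓ k, w ℓ k = 1 / w k ℓ)
    (wtot : κ → ℝ)
    (hwtot : ∀ ℓ, wtot ℓ =
      if (Q ℓ).comp (K'.comp P) ≠ 0 then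
        ∑ k, (if ((Q ℓ).comp (K'.comp P)).comp ((adjoint K').comp (Q k)) ≠ 0 ∧ a k ≠ 0
          then w ℓ k else 0)
      else 0)
    (y : Y) :
    ‖∑ ℓ, a ℓ • adjoint ((Q ℓ).comp (K'.comp P)) y‖ ^ 2 ≤
      ∑ ℓ, a ℓ ^ 2 * wtot ℓ * ‖adjoint ((Q ℓ).comp (K'.comp P)) y‖ ^ 2 := by
  have hP : adjoint P = P := ((eq_adjoint_iff P P).mpr hPsa).symm
  have hcomp : ∀ ℓ k, ((Q ℓ).comp (K'.comp P)).comp (adjoint ((Q k).comp (K'.comp P))) =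
      ((Q ℓ).comp (K'.comp P)).comp ((adjoint K').comp (Q k)) := by
    intro ℓ k
    rw [adjoint_comp, adjoint_comp, hP, ← ((eq_adjoint_iff _ _).mpr (hQsa k))]
    ext z
    simp only [comp_apply]
    rw [← comp_apply P P, hPidem]
  have hwtot' : ∀ ℓ, wtot ℓ = ∑ k, (if ((Q ℓ).comp (K'.comp P)).comp
      (adjoint ((Q k).comp (K'.comp P))) ≠ 0 ∧ a k ≠ 0 then w ℓ k else 0) := by
    intro ℓ
    simp_rw [hwtot, hcomp]
    split_ifs with h
    · rfl
    · simp [not_not.mp h]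
  simp_rw [hwtot']
  exact norm_sum_smul_adjoint_apply_sq_le _ a w hw hwsymm y

theorem sum_sq_mul_norm_adjoint_block_sq_le {ι : Type*} [Fintype ι] (P : ι → X →L[ℝ] X)
    (hPsa : ∀ j, ∀ u v : X, ⟪P j u, v⟫ = ⟪u, P j v⟫)
    (hPorth : ∀ j j', j ≠ j' → (P j).comp (P j') = 0) {Q : Y →L[ℝ] Y}
    (hQsa : ∀ u v : Y, ⟪Q u, v⟫ = ⟪u, Q v⟫) (hQidem : Q.comp Q = Q) (K' : X →L[ℝ] Y)
    (c : ι → ℝ) (y : Y) :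
    ∑ j, c j ^ 2 * ‖adjoint (Q.comp (K'.comp (P j))) y‖ ^ 2 ≤
      ‖∑ j, c j • Q.comp (K'.comp (P j))‖ ^ 2 * ‖Q y‖ ^ 2 := by
  set T := ∑ j, c j • Q.comp (K'.comp (P j))
  have hQ : adjoint Q = Q := ((eq_adjoint_iff Q Q).mpr hQsa).symm
  have hblock : ∀ j z, adjoint (Q.comp (K'.comp (P j))) z = P j (adjoint K' (Q z)) := by
    intro j z
    rw [adjoint_comp, adjoint_comp, hQ, ← (eq_adjoint_iff _ _).mpr (hPsa j)]
    rfl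
  have hQQ : Q (Q y) = Q y := DFunLike.congr_fun hQidem y
  have hT : adjoint T (Q y) = ∑ j, c j • P j (adjoint K' (Q y)) := by
    simp only [T, map_sum, map_smulₛₗ, _root_.sum_apply, smul_apply, hblock, hQQ, conj_trivial]
  calc ∑ j, c j ^ 2 * ‖adjoint (Q.comp (K'.comp (P j))) y‖ ^ 2
      = ‖adjoint T (Q y)‖ ^ 2 := by
        simp_rw [hT, hblock, norm_sum_smul_apply_sq_of_orthogonal P hPsa hPorth]
    _ ≤ (‖T‖ * ‖Q y‖) ^ 2 := by
        gcongr
        simpa using (adjoint T).le_opNorm (Q y)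
    _ = ‖T‖ ^ 2 * ‖Q y‖ ^ 2 := mul_pow _ _ _

theorem sum_norm_sq_div_le_of_block_norm_sq_le {ι κ : Type*} [Fintype ι] [Fintype κ]
    (P : ι → X →L[ℝ] X) (hPsa : ∀ j, ∀ u v : X, ⟪P j u, v⟫ = ⟪u, P j v⟫)
    (hPidem : ∀ j, (P j).comp (P j) = P j) (hPorth : ∀ j j', j ≠ j' → (P j).comp (P j') = 0)
    (Q : κ → Y →L[ℝ] Y) (hQsa : ∀ ℓ, ∀ u v : Y, ⟪Q ℓ u, v⟫ = ⟪u, Q ℓ v⟫)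
    (hQidem : ∀ ℓ, (Q ℓ).comp (Q ℓ) = Q ℓ) (K' : X →L[ℝ] Y) (φ : ι → ℝ) (hφ : ∀ j, 0 < φ j)
    (lam : κ → ι → ℝ) (w : ι → κ → κ → ℝ) (hwpos : ∀ j ℓ k, 0 < w j ℓ k)
    (hwsym : ∀ j ℓ k, w j ℓ k = 1 / w j k ℓ) (wtot : ι → κ → ℝ)
    (hwtot : ∀ j ℓ, wtot j ℓ =
      if (Q ℓ).comp (K'.comp (P j)) ≠ 0 then
        ∑ k, (if ((Q ℓ).comp (K'.comp (P j))).comp ((adjoint K').comp (Q k)) ≠ 0 ∧ lam k j ≠ 0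
          then w j ℓ k else 0)
      else 0)
    (C : κ → ℝ)
    (hC : ∀ ℓ, ‖∑ j, (|lam ℓ j| * √(wtot j ℓ / φ j)) • (Q ℓ).comp (K'.comp (P j))‖ ^ 2 ≤ C ℓ)
    (y : Y) :
    ∑ j, ‖∑ ℓ, lam ℓ j • adjoint ((Q ℓ).comp (K'.comp (P j))) y‖ ^ 2 / φ j ≤
      ∑ ℓ, C ℓ * ‖Q ℓ y‖ ^ 2 := by
  have hwtot_nonneg : ∀ j ℓ, 0 ≤ wtot j ℓ := by
    intro j ℓ
    rw [hwtot]
    split_ifs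
    · exact sum_nonneg fun k _ => by split_ifs <;> simp [(hwpos j ℓ k).le]
    · rfl
  have hcoeff : ∀ j ℓ, lam ℓ j ^ 2 * wtot j ℓ / φ j = (|lam ℓ j| * √(wtot j ℓ / φ j)) ^ 2 := by
    intro j ℓ
    rw [mul_pow, sq_abs, Real.sq_sqrt (div_nonneg (hwtot_nonneg j ℓ) (hφ j).le), mul_div_assoc]
  calc ∑ j, ‖∑ ℓ, lam ℓ j • adjoint ((Q ℓ).comp (K'.comp (P j))) y‖ ^ 2 / φ j
      ≤ ∑ j, (∑ ℓ, lam ℓ j ^ 2 * wtot j ℓ *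
          ‖adjoint ((Q ℓ).comp (K'.comp (P j))) y‖ ^ 2) / φ j := by
        gcongr with j
        · exact (hφ j).le
        · exact norm_sum_smul_adjoint_block_sq_le_wtot (hPsa j) (hPidem j) Q hQsa K' _ (w j)
            (hwpos j) (hwsym j) (wtot j) (hwtot j) y
    _ = ∑ ℓ, ∑ j, (|lam ℓ j| * √(wtot j ℓ / φ j)) ^ 2 *
          ‖adjoint ((Q ℓ).comp (K'.comp (P j))) y‖ ^ 2 := by
        simp_rw [sum_div, ← hcoeff]
        rw [sum_comm]
        refine sum_congr rfl fun ℓ _ => sum_congr rfl fun j _ => by ring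
    _ ≤ ∑ ℓ, C ℓ * ‖Q ℓ y‖ ^ 2 := by
        gcongr with ℓ
        exact (sum_sq_mul_norm_adjoint_block_sq_le P hPsa hPorth (hQsa ℓ) (hQidem ℓ) K' _ y).trans
          (mul_le_mul_of_nonneg_right (hC ℓ) (sq_nonneg _))

end HilbertSpace

theorem stmt4_general {X Y : Type*}
    [NormedAddCommGroup X] [InnerProductSpace ℝ X] [CompleteSpace X]
    [NormedAddCommGroup Y] [InnerProductSpace ℝ Y] [CompleteSpace Y]
    {m n : ℕ}
    (P : Fin m → X →L[ℝ] X) (Q : Fin n → Y →L[ℝ] Y)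
    (hPsa : ∀ j, ∀ u v : X, ⟪P j u, v⟫ = ⟪u, P j v⟫)
    (hPidem : ∀ j, (P j).comp (P j) = P j)
    (hPorth : ∀ j j', j ≠ j' → (P j).comp (P j') = 0)
    (hQsa : ∀ ℓ, ∀ u v : Y, ⟪Q ℓ u, v⟫ = ⟪u, Q ℓ v⟫)
    (hQidem : ∀ ℓ, (Q ℓ).comp (Q ℓ) = Q ℓ)
    (K' : X →L[ℝ] Y)
    (φ : Fin m → ℝ) (ψ : Fin n → ℝ) (lam : Fin n → Fin m → ℝ)
    (hφ : ∀ j, 0 < φ j)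
    (w : Fin m → Fin n → Fin n → ℝ)
    (hwpos : ∀ j ℓ k, 0 < w j ℓ k)
    (hwsym : ∀ j ℓ k, w j ℓ k = 1 / w j k ℓ)
    (wtot : Fin m → Fin n → ℝ)
    (hwtot : ∀ j ℓ, wtot j ℓ =
      if (Q ℓ).comp (K'.comp (P j)) ≠ 0 then
        ∑ k : Fin n,
          (if ((Q ℓ).comp (K'.comp (P j))).comp
                ((ContinuousLinearMap.adjoint K').comp (Q k)) ≠ 0 ∧ lam k j ≠ 0
            then w j ℓ k else 0)
      else 0)
    (δ κ : ℝ) (hδκ : δ ≤ κ) (hκ : κ < 1)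
    (Φ : X →L[ℝ] X) (Ψ : Y →L[ℝ] Y) (Λ : X →L[ℝ] Y)
    (hΦ : Φ = ∑ j : Fin m, φ j • P j)
    (hΨ : Ψ = ∑ ℓ : Fin n, ψ ℓ • Q ℓ)
    (hΛ : Λ = ∑ ℓ : Fin n, ∑ j : Fin m, lam ℓ j • ((Q ℓ).comp (K'.comp (P j))))
    (hcond : ∀ ℓ, (1 - κ) * ψ ℓ ≥
      ‖∑ j : Fin m, (|lam ℓ j| * Real.sqrt (wtot j ℓ / φ j)) •
          ((Q ℓ).comp (K'.comp (P j)))‖ ^ 2) :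
    ∀ (x : X) (y : Y),
      ⟪Φ x, x⟫ - 2 * ⟪Λ x, y⟫ + ⟪Ψ y, y⟫ ≥
        δ * ⟪Φ x, x⟫ + ((κ - δ) / (1 - δ)) * ⟪Ψ y, y⟫ := by
  intro x y
  have hδ : 0 < 1 - δ := by linarith
  set g : Fin m → X := fun j => ∑ ℓ, lam ℓ j • adjoint ((Q ℓ).comp (K'.comp (P j))) y
  have hΦx : ⟪Φ x, x⟫ = ∑ j, φ j * ‖P j x‖ ^ 2 := hΦ ▸ inner_sum_smul_apply_self P hPsa hPidem φ x
  have hΨy : ⟪Ψ y, y⟫ = ∑ ℓ, ψ ℓ * ‖Q ℓ y‖ ^ 2 := hΨ ▸ inner_sum_smul_apply_self Q hQsa hQidem ψ y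
  have hΛxy : ⟪Λ x, y⟫ = ∑ j, ⟪P j x, g j⟫ :=
    hΛ ▸ inner_sum_sum_smul_apply P _ (fun ℓ j => by rw [comp_assoc, comp_assoc, hPidem]) lam x y
  have hg : ∑ j, ‖g j‖ ^ 2 / φ j ≤ (1 - κ) * ⟪Ψ y, y⟫ := by
    rw [hΨy, mul_sum]
    simp_rw [← mul_assoc]
    exact sum_norm_sq_div_le_of_block_norm_sq_le P hPsa hPidem hPorth Q hQsa hQidem K' φ hφ lam w
      hwpos hwsym wtot hwtot _ hcond y
  have hyoung := two_mul_sum_inner_le (fun j => P j x) g hφ hδ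
  rw [← hΦx, ← hΛxy] at hyoung
  have hcoeff : (κ - δ) / (1 - δ) = 1 - (1 - κ) / (1 - δ) := by field_simp; ring
  have hdiv := div_le_div_of_nonneg_right hg hδ.le
  rw [hcoeff, ge_iff_le, sub_mul, div_mul_eq_mul_div]
  linarith

/-- Blockwise step-length condition implies the lower bound
`Z M ≥ diag(δ Φ, ((κ-δ)/(1-δ)) Ψ)` on the local metric (Lemma 2.5). -/
theorem stmt4 {X Y : Type*}
    [NormedAddCommGroup X] [InnerProductSpace ℝ X] [CompleteSpace X]
    [NormedAddCommGroup Y] [InnerProductSpace ℝ Y] [CompleteSpace Y]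
    {m n : ℕ}
    (P : Fin m → X →L[ℝ] X) (Q : Fin n → Y →L[ℝ] Y)
    (hPsa : ∀ j, ∀ u v : X, ⟪P j u, v⟫ = ⟪u, P j v⟫)
    (hPidem : ∀ j, (P j).comp (P j) = P j)
    (hPorth : ∀ j j', j ≠ j' → (P j).comp (P j') = 0)
    (hQsa : ∀ ℓ, ∀ u v : Y, ⟪Q ℓ u, v⟫ = ⟪u, Q ℓ v⟫)
    (hQidem : ∀ ℓ, (Q ℓ).comp (Q ℓ) = Q ℓ)
    (hQorth : ∀ ℓ ℓ', ℓ ≠ ℓ' → (Q ℓ).comp (Q ℓ') = 0)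
    (K' : X →L[ℝ] Y)
    (φ : Fin m → ℝ) (ψ : Fin n → ℝ) (lam : Fin n → Fin m → ℝ)
    (hφ : ∀ j, 0 < φ j) (hψ : ∀ ℓ, 0 < ψ ℓ)
    (w : Fin m → Fin n → Fin n → ℝ)
    (hwpos : ∀ j ℓ k, 0 < w j ℓ k)
    (hwsym : ∀ j ℓ k, w j ℓ k = 1 / w j k ℓ)
    (wtot : Fin m → Fin n → ℝ)
    (hwtot : ∀ j ℓ, wtot j ℓ =
      if (Q ℓ).comp (K'.comp (P j)) ≠ 0 then
        ∑ k : Fin n,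
          (if ((Q ℓ).comp (K'.comp (P j))).comp
                ((ContinuousLinearMap.adjoint K').comp (Q k)) ≠ 0 ∧ lam k j ≠ 0
            then w j ℓ k else 0)
      else 0)
    (δ κ : ℝ) (hδ : 0 ≤ δ) (hδκ : δ ≤ κ) (hκ : κ < 1)
    (Φ : X →L[ℝ] X) (Ψ : Y →L[ℝ] Y) (Λ : X →L[ℝ] Y)
    (hΦ : Φ = ∑ j : Fin m, φ j • P j)
    (hΨ : Ψ = ∑ ℓ : Fin n, ψ ℓ • Q ℓ)
    (hΛ : Λ = ∑ ℓ : Fin n, ∑ j : Fin m, lam ℓ j • ((Q ℓ).comp (K'.comp (P j))))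
    (hcond : ∀ ℓ, (1 - κ) * ψ ℓ ≥
      ‖∑ j : Fin m, (|lam ℓ j| * Real.sqrt (wtot j ℓ / φ j)) •
          ((Q ℓ).comp (K'.comp (P j)))‖ ^ 2) :
    ∀ (x : X) (y : Y),
      ⟪Φ x, x⟫ - 2 * ⟪Λ x, y⟫ + ⟪Ψ y, y⟫ ≥
        δ * ⟪Φ x, x⟫ + ((κ - δ) / (1 - δ)) * ⟪Ψ y, y⟫ :=
  stmt4_general P Q hPsa hPidem hPorth hQsa hQidem K' φ ψ lam hφ w hwpos hwsym wtot hwtot δ κ hδκ hκ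
    Φ Ψ Λ hΦ hΨ hΛ hcond
end

section
/- For all real numbers p ∈ [1,2], ζ > 0 and s, r ≥ 0, one has s·r ≤ (p − 1)·ζ·s² + s^{2−p}·r^p/(p^p·ζ^{p−1}). -/
/-!
Since `s ^ (2 - p) * s ^ (p - 1) = s` and `s ^ (2 - p) * s ^ p = s ^ 2`, the inequality is
`s ^ (2 - p)` times `s ^ (p - 1) * r ≤ (p - 1) * ζ * s ^ p + r ^ p / (p ^ p * ζ ^ (p - 1))`.
After rescaling `s` by `p * ζ` this is `a ^ (p - 1) * b ≤ ((p - 1) * a ^ p + b ^ p) / p`, the weighted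
AM-GM inequality for `a ^ p` and `b ^ p` with weights `(p - 1) / p` and `1 / p`.
-/

open Real

theorem rpow_sub_one_mul_le_of_one_le {p a b : ℝ} (hp : 1 ≤ p) (ha : 0 ≤ a) (hb : 0 ≤ b) :
    a ^ (p - 1) * b ≤ ((p - 1) * a ^ p + b ^ p) / p := by
  have hp0 : 0 < p := by linarith
  have h := geom_mean_le_arith_mean2_weighted (div_nonneg (sub_nonneg.2 hp) hp0.le)
    (one_div_nonneg.2 hp0.le) (rpow_nonneg ha p) (rpow_nonneg hb p)
    (by field_simp; ring)
  rw [← rpow_mul ha, ← rpow_mul hb, mul_div_cancel₀ _ hp0.ne', mul_one_div_cancel hp0.ne',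
    rpow_one] at h
  convert h using 1
  field_simp

theorem rpow_sub_one_mul_le_of_one_le_of_pos {p ζ s r : ℝ} (hp : 1 ≤ p) (hζ : 0 < ζ) (hs : 0 ≤ s)
    (hr : 0 ≤ r) :
    s ^ (p - 1) * r ≤ (p - 1) * ζ * s ^ p + r ^ p / (p ^ p * ζ ^ (p - 1)) := by
  have hp0 : 0 < p := by linarith
  have hc : 0 < p * ζ := mul_pos hp0 hζ
  have hK : 0 < (p * ζ) ^ (p - 1) := rpow_pos_of_pos hc _
  have h := rpow_sub_one_mul_le_of_one_le hp (mul_nonneg hc.le hs) hr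
  have hpp : p ^ p * ζ ^ (p - 1) = p * (p * ζ) ^ (p - 1) := by
    rw [mul_rpow hp0.le hζ.le, rpow_sub_one hp0.ne']
    field_simp
  have hcp : (p * ζ) ^ p = (p * ζ) ^ (p - 1) * (p * ζ) := by
    rw [rpow_sub_one hc.ne']
    field_simp
  rw [mul_rpow hc.le hs, mul_rpow hc.le hs, hcp] at h
  rw [hpp, ← mul_le_mul_iff_of_pos_left hK]
  calc (p * ζ) ^ (p - 1) * (s ^ (p - 1) * r)
      ≤ ((p - 1) * ((p * ζ) ^ (p - 1) * (p * ζ) * s ^ p) + r ^ p) / p := by rwa [← mul_assoc]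
    _ = _ := by field_simp

theorem stmt6_general (p ζ s r : ℝ) (hp1 : 1 ≤ p) (hζ : 0 < ζ)
    (hs : 0 ≤ s) (hr : 0 ≤ r) :
    s * r ≤ (p - 1) * ζ * s ^ 2 + s ^ (2 - p) * r ^ p / (p ^ p * ζ ^ (p - 1)) := by
  have hs1 : s ^ (2 - p) * s ^ (p - 1) = s := by
    rw [← rpow_add' hs (by norm_num), show 2 - p + (p - 1) = 1 by ring, rpow_one]
  have hs2 : s ^ (2 - p) * s ^ p = s ^ 2 := by
    rw [← rpow_add' hs (by norm_num), sub_add_cancel, rpow_two]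
  calc s * r = s ^ (2 - p) * (s ^ (p - 1) * r) := by rw [← mul_assoc, hs1]
    _ ≤ s ^ (2 - p) * ((p - 1) * ζ * s ^ p + r ^ p / (p ^ p * ζ ^ (p - 1))) :=
      mul_le_mul_of_nonneg_left (rpow_sub_one_mul_le_of_one_le_of_pos hp1 hζ hs hr) (rpow_nonneg hs _)
    _ = _ := by rw [← hs2]; ring

/-- Young-type inequality with exponent `p ∈ [1,2]`:
`s·r ≤ (p-1)·ζ·s² + s^(2-p)·r^p/(p^p·ζ^(p-1))` (real powers). -/
theorem stmt6 (p ζ s r : ℝ) (hp1 : 1 ≤ p) (hp2 : p ≤ 2) (hζ : 0 < ζ)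
    (hs : 0 ≤ s) (hr : 0 ≤ r) :
    s * r ≤ (p - 1) * ζ * s ^ 2 + s ^ (2 - p) * r ^ p / (p ^ p * ζ ^ (p - 1)) :=
  stmt6_general p ζ s r hp1 hζ hs hr
end

section
/- For every ν ∈ A(x^{i+1}) and ξ ∈ B(y^{i+1}), writing Δx := x^{i+1} − x^i, Δy := y^{i+1} − y^i, dx := x^{i+1} − x*, dy := y^{i+1} − y*, one has (1/2)·q(Δx,Δy) + (1/2)·[q(dx,dy) − q'(dx,dy)] + ⟨ΦT(ν + ∇K(x^i)* y^{i+1}), dx⟩ + ⟨ΨΣ̂(ξ − K(x̄) + ∇K(x^i)Ω Δx), dy⟩ ≥ (δ/2)·⟨ΦΔx, Δx⟩ − (L/2)·‖Ω + id_X‖²·‖P(ΨΣ̂ dy)‖·‖Δx‖² + ((κ−δ)/(2(1−δ)))·⟨ΨΔy, Δy⟩ + (1/2)·Σ_j [φ_j − φ'_j + 2·χ_S(j)·φ_j τ_j (γ_{G,j} + γ_{K,j})]·‖P_j dx‖² + (1/2)·Σ_ℓ [ψ_ℓ − ψ'_ℓ + 2·χ_V(ℓ)·ψ_ℓ σ_ℓ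 γ_{F,ℓ}]·‖Q_ℓ dy‖² + D^K + D^Λ, where χ_S, χ_V denote the indicator functions of S and V, D^Λ := ⟨(Λ' − Λ)dx, dy⟩ + ⟨ΦT ∇K(x^i)* dy, dx⟩ − ⟨ΨΣ̂ ∇K(x^i) dx, dy⟩, and D^K := ⟨ΦT [∇K(x^i) − ∇K(x*)]* y*, dx⟩ − ⟨ΦT Γ_K dx, dx⟩ + ⟨ΨΣ̂ (K(x*) − K(x^i) − ∇K(x^i)(x* − x^i)), dy⟩. -/
/-
The left-hand side splits into four pieces. The metric lower bound handles `q(Δx, Δy)`, and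
`q - q'` is an exact blockwise identity because the tests `Φ, Ψ, Φ', Ψ'` are block diagonal. On the
primal side one adds and subtracts `∇K(x*)* y*`: the block-diagonal operator `ΦT` has nonnegative
weights, so blockwise strong monotonicity of `A` gives the `γ_G` terms, and what is left are cross
terms of `D^K` and `D^Λ`. On the dual side one expands `K(x̄)` around `x^i`; the Taylor remainder
`K(x̄) - K(x^i) - ∇K(x^i)(x̄ - x^i)` lies in the range of `P` because `(id - P) ∘ ∇K` is constant,
and has norm at most `(L/2)‖x̄ - x^i‖² ≤ (L/2)‖Ω + id‖²‖Δx‖²` since `∇K` is `L`-Lipschitz.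
-/

open scoped RealInnerProductSpace

open ContinuousLinearMap Finset Set

section ProjectionFamily

variable {E : Type*} [NormedAddCommGroup E] [InnerProductSpace ℝ E] {ι : Type*}
  (P : ι → E →L[ℝ] E)

theorem sum_smul_comp_sum_smul_of_orthogonal [DecidableEq ι]
    (hidem : ∀ j, (P j).comp (P j) = P j) (horth : ∀ j k, j ≠ k → (P j).comp (P k) = 0)
    (s t : Finset ι) (c d : ι → ℝ) :
    (∑ j ∈ s, c j • P j).comp (∑ k ∈ t, d k • P k) = ∑ j ∈ s ∩ t, (c j * d j) • P j := by
  have hcomp : ∀ j k, (c j • P j).comp (d k • P k) = if j = k then (c j * d j) • P j else 0 := by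
    intro j k
    split_ifs with h
    · subst h; rw [smul_comp, comp_smul, hidem, smul_smul]
    · rw [smul_comp, comp_smul, horth j k h, smul_zero, smul_zero]
  rw [finsetSum_comp]
  simp only [comp_finsetSum, hcomp, sum_ite_eq, sum_ite_mem]

variable {P}

theorem inner_sum_smul_apply_of_proj (hsa : ∀ j u v, ⟪P j u, v⟫ = ⟪u, P j v⟫)
    (hidem : ∀ j, (P j).comp (P j) = P j) (s : Finset ι) (c : ι → ℝ) (u v : E) :
    ⟪(∑ j ∈ s, c j • P j) u, v⟫ = ∑ j ∈ s, c j * ⟪P j u, P j v⟫ := by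
  simp only [_root_.sum_apply, sum_inner, smul_apply, real_inner_smul_left]
  refine sum_congr rfl fun j _ => ?_
  rw [← hsa, ← comp_apply, hidem]

theorem inner_sum_smul_apply_self_of_proj (hsa : ∀ j u v, ⟪P j u, v⟫ = ⟪u, P j v⟫)
    (hidem : ∀ j, (P j).comp (P j) = P j) (s : Finset ι) (c : ι → ℝ) (u : E) :
    ⟪(∑ j ∈ s, c j • P j) u, u⟫ = ∑ j ∈ s, c j * ‖P j u‖ ^ 2 := by
  simp only [inner_sum_smul_apply_of_proj hsa hidem, real_inner_self_eq_norm_sq]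

theorem inner_sum_smul_apply_comm_of_proj (hsa : ∀ j u v, ⟪P j u, v⟫ = ⟪u, P j v⟫)
    (hidem : ∀ j, (P j).comp (P j) = P j) (s : Finset ι) (c : ι → ℝ) (u v : E) :
    ⟪(∑ j ∈ s, c j • P j) u, v⟫ = ⟪u, (∑ j ∈ s, c j • P j) v⟫ := by
  rw [inner_sum_smul_apply_of_proj hsa hidem, ← real_inner_comm,
    inner_sum_smul_apply_of_proj hsa hidem]
  exact sum_congr rfl fun j _ => by rw [real_inner_comm]

theorem sum_mul_norm_sq_le_inner_sum_smul_of_proj (hsa : ∀ j u v, ⟪P j u, v⟫ = ⟪u, P j v⟫)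
    (hidem : ∀ j, (P j).comp (P j) = P j) {s : Finset ι} {c : ι → ℝ} (hc : ∀ j ∈ s, 0 ≤ c j)
    (γ : ι → ℝ) {u v : E} (hmono : ∀ j ∈ s, γ j * ‖P j v‖ ^ 2 ≤ ⟪P j u, P j v⟫) :
    ∑ j ∈ s, c j * γ j * ‖P j v‖ ^ 2 ≤ ⟪(∑ j ∈ s, c j • P j) u, v⟫ := by
  rw [inner_sum_smul_apply_of_proj hsa hidem]
  exact sum_le_sum fun j hj => by
    rw [mul_assoc]; exact mul_le_mul_of_nonneg_left (hmono j hj) (hc j hj)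

end ProjectionFamily

section Taylor

variable {X Y : Type*} [NormedAddCommGroup X] [NormedSpace ℝ X] [NormedAddCommGroup Y]
  {𝒳 : Set X} {K : X → Y}

theorem norm_sub_sub_fderiv_le_of_lipschitz [NormedSpace ℝ Y] {DK : X → X →L[ℝ] Y}
    (hconv : Convex ℝ 𝒳) (hdiff : ∀ x ∈ 𝒳, HasFDerivWithinAt K (DK x) 𝒳 x) {L : ℝ}
    (hLip : ∀ x ∈ 𝒳, ∀ x' ∈ 𝒳, ‖DK x - DK x'‖ ≤ L * ‖x - x'‖)
    {a b : X} (ha : a ∈ 𝒳) (hb : b ∈ 𝒳) :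
    ‖K b - K a - DK a (b - a)‖ ≤ L / 2 * ‖b - a‖ ^ 2 := by
  set v := b - a
  let g : ℝ → Y := fun t => K (a + t • v) - K a - t • DK a v
  have hseg : MapsTo (fun t : ℝ => a + t • v) (Icc 0 1) 𝒳 := fun t ht =>
    hconv.add_smul_sub_mem ha hb ht
  have hg : ∀ t ∈ Icc (0 : ℝ) 1,
      HasDerivWithinAt g (DK (a + t • v) v - DK a v) (Icc 0 1) t := by
    intro t ht
    have hline : HasDerivWithinAt (fun t : ℝ => a + t • v) v (Icc 0 1) t := by
      simpa using ((hasDerivAt_id t).smul_const v).hasDerivWithinAt.const_add a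
    exact (((hdiff _ (hseg ht)).comp_hasDerivWithinAt t hline hseg).sub_const (K a)).sub
      (by simpa using ((hasDerivAt_id t).smul_const (DK a v)).hasDerivWithinAt)
  have hbound : ∀ t ∈ Ico (0 : ℝ) 1, ‖DK (a + t • v) v - DK a v‖ ≤ L * ‖v‖ ^ 2 * t := by
    intro t ht
    calc ‖DK (a + t • v) v - DK a v‖ = ‖(DK (a + t • v) - DK a) v‖ := rfl
      _ ≤ ‖DK (a + t • v) - DK a‖ * ‖v‖ := le_opNorm _ v
      _ ≤ L * ‖a + t • v - a‖ * ‖v‖ := by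
        gcongr; exact hLip _ (hseg (Ico_subset_Icc_self ht)) a ha
      _ = L * ‖v‖ ^ 2 * t := by
        rw [add_sub_cancel_left, norm_smul, Real.norm_of_nonneg ht.1]; ring
  have hB : ∀ t : ℝ, HasDerivAt (fun t : ℝ => L / 2 * ‖v‖ ^ 2 * t ^ 2) (L * ‖v‖ ^ 2 * t) t :=
    fun t => ((hasDerivAt_pow 2 t).const_mul (L / 2 * ‖v‖ ^ 2)).congr_deriv (by ring)
  -- fencing: `‖g t‖` stays below `L / 2 * ‖v‖ ^ 2 * t ^ 2`, whose derivative bounds `‖g' t‖`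
  have key := image_norm_le_of_norm_deriv_right_le_deriv_boundary (f := g)
    (fun t ht => (hg t ht).continuousWithinAt)
    (fun t ht => (hg t (Ico_subset_Icc_self ht)).mono_of_mem_nhdsWithin
      (Icc_mem_nhdsGE_of_mem ht))
    (by simp [g]) hB hbound (right_mem_Icc.2 zero_le_one)
  simpa [g, v] using key

theorem map_sub_sub_fderiv_eq_zero_of_comp_const [NormedSpace ℝ Y] {DK : X → X →L[ℝ] Y}
    {Z : Type*} [NormedAddCommGroup Z] [NormedSpace ℝ Z] (hconv : Convex ℝ 𝒳)
    (hdiff : ∀ x ∈ 𝒳, HasFDerivWithinAt K (DK x) 𝒳 x) {R : Y →L[ℝ] Z}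
    (hconst : ∀ x ∈ 𝒳, ∀ x' ∈ 𝒳, R.comp (DK x) = R.comp (DK x'))
    {a b : X} (ha : a ∈ 𝒳) (hb : b ∈ 𝒳) :
    R (K b - K a - DK a (b - a)) = 0 := by
  -- `R ∘ K` has a constant, hence `0`-Lipschitz, derivative
  have h := norm_sub_sub_fderiv_le_of_lipschitz (K := R ∘ K) (L := 0) hconv
    (fun x hx => R.hasFDerivAt.comp_hasFDerivWithinAt x (hdiff x hx))
    (fun x hx x' hx' => by rw [hconst x hx x' hx', sub_self, norm_zero, zero_mul]) ha hb
  simpa using h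

theorem inner_sub_sub_fderiv_le_of_lipschitz [InnerProductSpace ℝ Y] {DK : X → X →L[ℝ] Y}
    (hconv : Convex ℝ 𝒳) (hdiff : ∀ x ∈ 𝒳, HasFDerivWithinAt K (DK x) 𝒳 x) {L : ℝ}
    (hLip : ∀ x ∈ 𝒳, ∀ x' ∈ 𝒳, ‖DK x - DK x'‖ ≤ L * ‖x - x'‖)
    {R : Y →L[ℝ] Y} (hRsa : ∀ u v, ⟪R u, v⟫ = ⟪u, R v⟫)
    (hconst : ∀ x ∈ 𝒳, ∀ x' ∈ 𝒳,
      (ContinuousLinearMap.id ℝ Y - R).comp (DK x) = (ContinuousLinearMap.id ℝ Y - R).comp (DK x'))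
    {a b : X} (ha : a ∈ 𝒳) (hb : b ∈ 𝒳) (w : Y) :
    ⟪K b - K a - DK a (b - a), w⟫ ≤ L / 2 * ‖b - a‖ ^ 2 * ‖R w‖ := by
  set r := K b - K a - DK a (b - a)
  have hr : R r = r := by
    have h := map_sub_sub_fderiv_eq_zero_of_comp_const hconv hdiff hconst ha hb
    rwa [sub_apply, id_apply, sub_eq_zero, eq_comm] at h
  calc ⟪r, w⟫ = ⟪r, R w⟫ := by rw [← hRsa, hr]
    _ ≤ ‖r‖ * ‖R w‖ := real_inner_le_norm _ _
    _ ≤ L / 2 * ‖b - a‖ ^ 2 * ‖R w‖ := by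
      gcongr; exact norm_sub_sub_fderiv_le_of_lipschitz hconv hdiff hLip ha hb

end Taylor

theorem norm_add_apply_sub_sub_le {X : Type*} [NormedAddCommGroup X] [NormedSpace ℝ X]
    (Ω : X →L[ℝ] X) (x x' : X) :
    ‖x' + Ω (x' - x) - x‖ ≤ ‖Ω + ContinuousLinearMap.id ℝ X‖ * ‖x' - x‖ := by
  have h : x' + Ω (x' - x) - x = (Ω + ContinuousLinearMap.id ℝ X) (x' - x) := by
    rw [add_apply, id_apply]; abel
  exact h ▸ le_opNorm _ _

theorem half_sum_add_indicator_mul {ι : Type*} [Fintype ι] [DecidableEq ι] (s : Finset ι)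
    (a u v c w : ι → ℝ) :
    (1 / 2) * ∑ j, (a j + 2 * (if j ∈ s then (1 : ℝ) else 0) * u j * v j * c j) * w j
      = (1 / 2) * ∑ j, a j * w j + ∑ j ∈ s, u j * v j * c j * w j := by
  have h : ∀ j, (a j + 2 * (if j ∈ s then (1 : ℝ) else 0) * u j * v j * c j) * w j
      = a j * w j + 2 * (if j ∈ s then u j * v j * c j * w j else 0) := by
    intro j; split_ifs <;> ring
  rw [sum_congr rfl fun j _ => h j, sum_add_distrib, ← mul_sum, sum_ite_mem, Finset.univ_inter]
  ring

theorem le_inner_add_adjoint_of_blockwise_monotone {X Y ι : Type*} [NormedAddCommGroup X]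
    [InnerProductSpace ℝ X] [CompleteSpace X] [NormedAddCommGroup Y] [InnerProductSpace ℝ Y]
    [CompleteSpace Y] {P : ι → X →L[ℝ] X}
    (hsa : ∀ j u v, ⟪P j u, v⟫ = ⟪u, P j v⟫) (hidem : ∀ j, (P j).comp (P j) = P j)
    {s : Finset ι} {c γ : ι → ℝ} {M : X →L[ℝ] X} (hM : M = ∑ j ∈ s, c j • P j)
    (hc : ∀ j ∈ s, 0 ≤ c j) {A A' : X →L[ℝ] Y} {ν d : X} {y y' : Y}
    (hmono : ∀ j, ⟪P j (ν + adjoint A' y'), P j d⟫ ≥ γ j * ‖P j d‖ ^ 2) :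
    ∑ j ∈ s, c j * γ j * ‖P j d‖ ^ 2 + ⟪M (adjoint (A - A') y'), d⟫
        + ⟪M (adjoint A (y - y')), d⟫ ≤ ⟪M (ν + adjoint A y), d⟫ := by
  have hsplit :
      ν + adjoint A y = (ν + adjoint A' y') + adjoint (A - A') y' + adjoint A (y - y') := by
    simp only [map_sub, sub_apply]; abel
  have hmono' := sum_mul_norm_sq_le_inner_sum_smul_of_proj hsa hidem hc γ fun j _ => hmono j
  rw [hsplit, map_add, map_add, inner_add_left, inner_add_left, hM]
  linarith

theorem le_inner_sub_add_fderiv_of_blockwise_monotone {X Y ι : Type*} [NormedAddCommGroup X]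
    [NormedSpace ℝ X] [NormedAddCommGroup Y] [InnerProductSpace ℝ Y] {Q : ι → Y →L[ℝ] Y}
    (hsa : ∀ j u v, ⟪Q j u, v⟫ = ⟪u, Q j v⟫) (hidem : ∀ j, (Q j).comp (Q j) = Q j)
    {s : Finset ι} {c γ : ι → ℝ} {N : Y →L[ℝ] Y} (hN : N = ∑ j ∈ s, c j • Q j)
    (hc : ∀ j ∈ s, 0 ≤ c j) {𝒳 : Set X} (hconv : Convex ℝ 𝒳) {K : X → Y}
    {DK : X → X →L[ℝ] Y} (hdiff : ∀ x ∈ 𝒳, HasFDerivWithinAt K (DK x) 𝒳 x) {L : ℝ}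
    (hL : 0 ≤ L) (hLip : ∀ x ∈ 𝒳, ∀ x' ∈ 𝒳, ‖DK x - DK x'‖ ≤ L * ‖x - x'‖)
    {R : Y →L[ℝ] Y} (hRsa : ∀ u v, ⟪R u, v⟫ = ⟪u, R v⟫)
    (hconst : ∀ x ∈ 𝒳, ∀ x' ∈ 𝒳,
      (ContinuousLinearMap.id ℝ Y - R).comp (DK x) = (ContinuousLinearMap.id ℝ Y - R).comp (DK x'))
    {Ω : X →L[ℝ] X} {x₀ x x' xbar : X} (hxbar : xbar = x' + Ω (x' - x)) (hx : x ∈ 𝒳)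
    (hxbar𝒳 : xbar ∈ 𝒳)
    {ξ d : Y} (hmono : ∀ j, ⟪Q j (ξ - K x₀), Q j d⟫ ≥ γ j * ‖Q j d‖ ^ 2) :
    ∑ j ∈ s, c j * γ j * ‖Q j d‖ ^ 2 + ⟪N (K x₀ - K x - DK x (x₀ - x)), d⟫
        - ⟪N (DK x (x' - x₀)), d⟫
        - L / 2 * ‖Ω + ContinuousLinearMap.id ℝ X‖ ^ 2 * ‖R (N d)‖ * ‖x' - x‖ ^ 2
      ≤ ⟪N (ξ - K xbar + DK x (Ω (x' - x))), d⟫ := by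
  have hsplit : ξ - K xbar + DK x (Ω (x' - x)) = (ξ - K x₀) + (K x₀ - K x - DK x (x₀ - x))
      - DK x (x' - x₀) - (K xbar - K x - DK x (xbar - x)) := by
    rw [hxbar]; simp only [map_sub, map_add]; abel
  have hmono' := sum_mul_norm_sq_le_inner_sum_smul_of_proj hsa hidem hc γ fun j _ => hmono j
  have hremainder : ⟪N (K xbar - K x - DK x (xbar - x)), d⟫
      ≤ L / 2 * ‖Ω + ContinuousLinearMap.id ℝ X‖ ^ 2 * ‖R (N d)‖ * ‖x' - x‖ ^ 2 := by
    rw [hN, inner_sum_smul_apply_comm_of_proj hsa hidem, ← hN]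
    calc _ ≤ L / 2 * ‖xbar - x‖ ^ 2 * ‖R (N d)‖ :=
          inner_sub_sub_fderiv_le_of_lipschitz hconv hdiff hLip hRsa hconst hx hxbar𝒳 _
      _ ≤ L / 2 * (‖Ω + ContinuousLinearMap.id ℝ X‖ * ‖x' - x‖) ^ 2 * ‖R (N d)‖ := by
          gcongr; rw [hxbar]; exact norm_add_apply_sub_sub_le Ω x x'
      _ = _ := by ring
  rw [← hN] at hmono'
  rw [hsplit]
  simp only [map_sub, map_add, inner_sub_left, inner_add_left] at hmono' hremainder ⊢
  linarith

theorem stmt7_general {X Y : Type*}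
    [NormedAddCommGroup X] [InnerProductSpace ℝ X] [CompleteSpace X]
    [NormedAddCommGroup Y] [InnerProductSpace ℝ Y] [CompleteSpace Y]
    {m n : ℕ}
    (P : Fin m → X →L[ℝ] X) (Q : Fin n → Y →L[ℝ] Y)
    (hPsa : ∀ j, ∀ u v : X, ⟪P j u, v⟫ = ⟪u, P j v⟫)
    (hPidem : ∀ j, (P j).comp (P j) = P j)
    (hPorth : ∀ j j', j ≠ j' → (P j).comp (P j') = 0)
    (hQsa : ∀ ℓ, ∀ u v : Y, ⟪Q ℓ u, v⟫ = ⟪u, Q ℓ v⟫)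
    (hQidem : ∀ ℓ, (Q ℓ).comp (Q ℓ) = Q ℓ)
    (hQorth : ∀ ℓ ℓ', ℓ ≠ ℓ' → (Q ℓ).comp (Q ℓ') = 0)
    -- points and over-relaxation
    (xstar xi xip1 : X) (ystar yi yip1 : Y) (Ω : X →L[ℝ] X)
    (xbar : X) (hxbar : xbar = xip1 + Ω (xip1 - xi))
    -- the nonlinear operator K
    (𝒳 : Set X) (hconv : Convex ℝ 𝒳)
    (hxi : xi ∈ 𝒳) (hxbar𝒳 : xbar ∈ 𝒳)
    (K : X → Y) (DK : X → X →L[ℝ] Y)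
    (hdiff : ∀ x ∈ 𝒳, HasFDerivWithinAt K (DK x) 𝒳 x)
    (L : ℝ) (hL : 0 ≤ L)
    (hLip : ∀ x ∈ 𝒳, ∀ x' ∈ 𝒳, ‖DK x - DK x'‖ ≤ L * ‖x - x'‖)
    (PNL : Y →L[ℝ] Y)
    (hPNLsa : ∀ u v : Y, ⟪PNL u, v⟫ = ⟪u, PNL v⟫)
    (hPNLconst : ∀ x ∈ 𝒳, ∀ x' ∈ 𝒳,
      (ContinuousLinearMap.id ℝ Y - PNL).comp (DK x)
        = (ContinuousLinearMap.id ℝ Y - PNL).comp (DK x'))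
    -- the set-valued maps and their blockwise strong monotonicity at the iterates
    (A : X → Set X) (B : Y → Set Y)
    (γG : Fin m → ℝ) (γF : Fin n → ℝ)
    (hA : ∀ ν ∈ A xip1, ∀ j,
      ⟪P j (ν + ContinuousLinearMap.adjoint (DK xstar) ystar), P j (xip1 - xstar)⟫ ≥
        γG j * ‖P j (xip1 - xstar)‖ ^ 2)
    (hB : ∀ ξ ∈ B yip1, ∀ ℓ,
      ⟪Q ℓ (ξ - K xstar), Q ℓ (yip1 - ystar)⟫ ≥ γF ℓ * ‖Q ℓ (yip1 - ystar)‖ ^ 2)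
    -- step lengths and tests
    (S : Finset (Fin m)) (V : Finset (Fin n))
    (τ : Fin m → ℝ) (σ : Fin n → ℝ)
    (hτ : ∀ j ∈ S, 0 < τ j) (hσ : ∀ ℓ ∈ V, 0 < σ ℓ)
    (φ φ' : Fin m → ℝ) (ψ ψ' : Fin n → ℝ)
    (hφ : ∀ j, 0 < φ j) (hψ : ∀ ℓ, 0 < ψ ℓ)
    (T : X →L[ℝ] X) (hT : T = ∑ j ∈ S, τ j • P j)
    (Sg : Y →L[ℝ] Y) (hSg : Sg = ∑ ℓ ∈ V, σ ℓ • Q ℓ)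
    (Φ Φ'op : X →L[ℝ] X) (Ψ Ψ'op : Y →L[ℝ] Y)
    (hΦ : Φ = ∑ j : Fin m, φ j • P j) (hΦ' : Φ'op = ∑ j : Fin m, φ' j • P j)
    (hΨ : Ψ = ∑ ℓ : Fin n, ψ ℓ • Q ℓ) (hΨ' : Ψ'op = ∑ ℓ : Fin n, ψ' ℓ • Q ℓ)
    (Λ Λ' : X →L[ℝ] Y)
    (γK : Fin m → ℝ) (ΓK : X →L[ℝ] X) (hΓK : ΓK = ∑ j : Fin m, γK j • P j)
    -- the quadratic forms
    (q q' : X → Y → ℝ)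
    (hq : ∀ (x : X) (y : Y), q x y = ⟪Φ x, x⟫ - 2 * ⟪Λ x, y⟫ + ⟪Ψ y, y⟫)
    (hq' : ∀ (x : X) (y : Y), q' x y = ⟪Φ'op x, x⟫ - 2 * ⟪Λ' x, y⟫ + ⟪Ψ'op y, y⟫)
    (δ κ : ℝ)
    (hmetric : ∀ (x : X) (y : Y),
      q x y ≥ δ * ⟪Φ x, x⟫ + ((κ - δ) / (1 - δ)) * ⟪Ψ y, y⟫) :
    ∀ ν ∈ A xip1, ∀ ξ ∈ B yip1,
      (1 / 2) * q (xip1 - xi) (yip1 - yi)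
        + (1 / 2) * (q (xip1 - xstar) (yip1 - ystar) - q' (xip1 - xstar) (yip1 - ystar))
        + ⟪(Φ.comp T) (ν + ContinuousLinearMap.adjoint (DK xi) yip1), xip1 - xstar⟫
        + ⟪(Ψ.comp Sg) (ξ - K xbar + DK xi (Ω (xip1 - xi))), yip1 - ystar⟫
      ≥ (δ / 2) * ⟪Φ (xip1 - xi), xip1 - xi⟫
        - (L / 2) * ‖Ω + ContinuousLinearMap.id ℝ X‖ ^ 2
            * ‖PNL ((Ψ.comp Sg) (yip1 - ystar))‖ * ‖xip1 - xi‖ ^ 2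
        + ((κ - δ) / (2 * (1 - δ))) * ⟪Ψ (yip1 - yi), yip1 - yi⟫
        + (1 / 2) * ∑ j : Fin m,
            (φ j - φ' j + 2 * (if j ∈ S then (1 : ℝ) else 0) * φ j * τ j * (γG j + γK j))
              * ‖P j (xip1 - xstar)‖ ^ 2
        + (1 / 2) * ∑ ℓ : Fin n,
            (ψ ℓ - ψ' ℓ + 2 * (if ℓ ∈ V then (1 : ℝ) else 0) * ψ ℓ * σ ℓ * γF ℓ)
              * ‖Q ℓ (yip1 - ystar)‖ ^ 2
        + (⟪(Φ.comp T) (ContinuousLinearMap.adjoint (DK xi - DK xstar) ystar),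
              xip1 - xstar⟫
            - ⟪((Φ.comp T).comp ΓK) (xip1 - xstar), xip1 - xstar⟫
            + ⟪(Ψ.comp Sg) (K xstar - K xi - DK xi (xstar - xi)), yip1 - ystar⟫)
        + (⟪(Λ' - Λ) (xip1 - xstar), yip1 - ystar⟫
            + ⟪(Φ.comp T) (ContinuousLinearMap.adjoint (DK xi) (yip1 - ystar)),
                xip1 - xstar⟫
            - ⟪(Ψ.comp Sg) (DK xi (xip1 - xstar)), yip1 - ystar⟫) := by
  intro ν hν ξ hξ
  set dx := xip1 - xstar
  set dy := yip1 - ystar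
  have hΦT : Φ.comp T = ∑ j ∈ S, (φ j * τ j) • P j := by
    rw [hΦ, hT, sum_smul_comp_sum_smul_of_orthogonal P hPidem hPorth, Finset.univ_inter]
  have hΨSg : Ψ.comp Sg = ∑ ℓ ∈ V, (ψ ℓ * σ ℓ) • Q ℓ := by
    rw [hΨ, hSg, sum_smul_comp_sum_smul_of_orthogonal Q hQidem hQorth, Finset.univ_inter]
  have hΓK : ⟪((Φ.comp T).comp ΓK) dx, dx⟫
      = ∑ j ∈ S, φ j * τ j * γK j * ‖P j dx‖ ^ 2 := by
    rw [hΦT, hΓK, sum_smul_comp_sum_smul_of_orthogonal P hPidem hPorth, Finset.inter_univ,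
      inner_sum_smul_apply_self_of_proj hPsa hPidem]
  have hprimal := le_inner_add_adjoint_of_blockwise_monotone hPsa hPidem hΦT
    (fun j hj => (mul_pos (hφ j) (hτ j hj)).le) (A := DK xi) (y := yip1) (hA ν hν)
  have hdual := le_inner_sub_add_fderiv_of_blockwise_monotone hQsa hQidem hΨSg
    (fun ℓ hℓ => (mul_pos (hψ ℓ) (hσ ℓ hℓ)).le) hconv hdiff hL hLip hPNLsa hPNLconst hxbar hxi
    hxbar𝒳 (hB ξ hξ)
  have hqq' : q dx dy - q' dx dy
      = ∑ j, (φ j - φ' j) * ‖P j dx‖ ^ 2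
        + ∑ ℓ, (ψ ℓ - ψ' ℓ) * ‖Q ℓ dy‖ ^ 2 + 2 * ⟪(Λ' - Λ) dx, dy⟫ := by
    simp only [hq, hq', hΦ, hΦ', hΨ, hΨ', inner_sum_smul_apply_self_of_proj hPsa hPidem,
      inner_sum_smul_apply_self_of_proj hQsa hQidem, sub_apply, inner_sub_left, sub_mul,
      sum_sub_distrib]
    ring
  have hsplit : ∑ j ∈ S, φ j * τ j * (γG j + γK j) * ‖P j dx‖ ^ 2
      = ∑ j ∈ S, φ j * τ j * γG j * ‖P j dx‖ ^ 2
        + ∑ j ∈ S, φ j * τ j * γK j * ‖P j dx‖ ^ 2 := by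
    rw [← sum_add_distrib]; exact sum_congr rfl fun j _ => by ring
  have hcoef : (κ - δ) / (2 * (1 - δ)) = 1 / 2 * ((κ - δ) / (1 - δ)) := by
    rw [div_mul_eq_div_div_swap]; ring
  have hΔ := hmetric (xip1 - xi) (yip1 - yi)
  rw [half_sum_add_indicator_mul, half_sum_add_indicator_mul, hsplit, hcoef]
  linarith

/-- The fundamental estimate (Lemma 3.2): lower bound on
`½‖Δu‖²_{ZM} + ½(‖du‖²_{ZM} - ‖du‖²_{Z'M'}) + ⟨W H̃(u⁺), du⟩_{ZW}`. -/
theorem stmt7 {X Y : Type*}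
    [NormedAddCommGroup X] [InnerProductSpace ℝ X] [CompleteSpace X]
    [NormedAddCommGroup Y] [InnerProductSpace ℝ Y] [CompleteSpace Y]
    {m n : ℕ}
    (P : Fin m → X →L[ℝ] X) (Q : Fin n → Y →L[ℝ] Y)
    (hPsa : ∀ j, ∀ u v : X, ⟪P j u, v⟫ = ⟪u, P j v⟫)
    (hPidem : ∀ j, (P j).comp (P j) = P j)
    (hPorth : ∀ j j', j ≠ j' → (P j).comp (P j') = 0)
    (hQsa : ∀ ℓ, ∀ u v : Y, ⟪Q ℓ u, v⟫ = ⟪u, Q ℓ v⟫)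
    (hQidem : ∀ ℓ, (Q ℓ).comp (Q ℓ) = Q ℓ)
    (hQorth : ∀ ℓ ℓ', ℓ ≠ ℓ' → (Q ℓ).comp (Q ℓ') = 0)
    -- points and over-relaxation
    (xstar xi xip1 : X) (ystar yi yip1 : Y) (Ω : X →L[ℝ] X)
    (xbar : X) (hxbar : xbar = xip1 + Ω (xip1 - xi))
    -- the nonlinear operator K
    (𝒳 : Set X) (hconv : Convex ℝ 𝒳)
    (hxstar : xstar ∈ 𝒳) (hxi : xi ∈ 𝒳) (hxip1 : xip1 ∈ 𝒳) (hxbar𝒳 : xbar ∈ 𝒳)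
    (K : X → Y) (DK : X → X →L[ℝ] Y)
    (hdiff : ∀ x ∈ 𝒳, HasFDerivWithinAt K (DK x) 𝒳 x)
    (L : ℝ) (hL : 0 ≤ L)
    (hLip : ∀ x ∈ 𝒳, ∀ x' ∈ 𝒳, ‖DK x - DK x'‖ ≤ L * ‖x - x'‖)
    (PNL : Y →L[ℝ] Y)
    (hPNLsa : ∀ u v : Y, ⟪PNL u, v⟫ = ⟪u, PNL v⟫)
    (hPNLidem : PNL.comp PNL = PNL)
    (hPNLconst : ∀ x ∈ 𝒳, ∀ x' ∈ 𝒳,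
      (ContinuousLinearMap.id ℝ Y - PNL).comp (DK x)
        = (ContinuousLinearMap.id ℝ Y - PNL).comp (DK x'))
    -- the set-valued maps and their blockwise strong monotonicity at the iterates
    (A : X → Set X) (B : Y → Set Y)
    (γG : Fin m → ℝ) (γF : Fin n → ℝ) (hγG : ∀ j, 0 ≤ γG j) (hγF : ∀ ℓ, 0 ≤ γF ℓ)
    (hA : ∀ ν ∈ A xip1, ∀ j,
      ⟪P j (ν + ContinuousLinearMap.adjoint (DK xstar) ystar), P j (xip1 - xstar)⟫ ≥
        γG j * ‖P j (xip1 - xstar)‖ ^ 2)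
    (hB : ∀ ξ ∈ B yip1, ∀ ℓ,
      ⟪Q ℓ (ξ - K xstar), Q ℓ (yip1 - ystar)⟫ ≥ γF ℓ * ‖Q ℓ (yip1 - ystar)‖ ^ 2)
    -- step lengths and tests
    (S : Finset (Fin m)) (V : Finset (Fin n))
    (τ : Fin m → ℝ) (σ : Fin n → ℝ)
    (hτ : ∀ j ∈ S, 0 < τ j) (hσ : ∀ ℓ ∈ V, 0 < σ ℓ)
    (φ φ' : Fin m → ℝ) (ψ ψ' : Fin n → ℝ)
    (hφ : ∀ j, 0 < φ j) (hφ' : ∀ j, 0 < φ' j)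
    (hψ : ∀ ℓ, 0 < ψ ℓ) (hψ' : ∀ ℓ, 0 < ψ' ℓ)
    (T : X →L[ℝ] X) (hT : T = ∑ j ∈ S, τ j • P j)
    (Sg : Y →L[ℝ] Y) (hSg : Sg = ∑ ℓ ∈ V, σ ℓ • Q ℓ)
    (Φ Φ'op : X →L[ℝ] X) (Ψ Ψ'op : Y →L[ℝ] Y)
    (hΦ : Φ = ∑ j : Fin m, φ j • P j) (hΦ' : Φ'op = ∑ j : Fin m, φ' j • P j)
    (hΨ : Ψ = ∑ ℓ : Fin n, ψ ℓ • Q ℓ) (hΨ' : Ψ'op = ∑ ℓ : Fin n, ψ' ℓ • Q ℓ)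
    (Λ Λ' : X →L[ℝ] Y)
    (γK : Fin m → ℝ) (ΓK : X →L[ℝ] X) (hΓK : ΓK = ∑ j : Fin m, γK j • P j)
    -- the quadratic forms
    (q q' : X → Y → ℝ)
    (hq : ∀ (x : X) (y : Y), q x y = ⟪Φ x, x⟫ - 2 * ⟪Λ x, y⟫ + ⟪Ψ y, y⟫)
    (hq' : ∀ (x : X) (y : Y), q' x y = ⟪Φ'op x, x⟫ - 2 * ⟪Λ' x, y⟫ + ⟪Ψ'op y, y⟫)
    (δ κ : ℝ) (hδ : 0 ≤ δ) (hδκ : δ ≤ κ) (hκ : κ < 1)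
    (hmetric : ∀ (x : X) (y : Y),
      q x y ≥ δ * ⟪Φ x, x⟫ + ((κ - δ) / (1 - δ)) * ⟪Ψ y, y⟫) :
    ∀ ν ∈ A xip1, ∀ ξ ∈ B yip1,
      (1 / 2) * q (xip1 - xi) (yip1 - yi)
        + (1 / 2) * (q (xip1 - xstar) (yip1 - ystar) - q' (xip1 - xstar) (yip1 - ystar))
        + ⟪(Φ.comp T) (ν + ContinuousLinearMap.adjoint (DK xi) yip1), xip1 - xstar⟫
        + ⟪(Ψ.comp Sg) (ξ - K xbar + DK xi (Ω (xip1 - xi))), yip1 - ystar⟫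
      ≥ (δ / 2) * ⟪Φ (xip1 - xi), xip1 - xi⟫
        - (L / 2) * ‖Ω + ContinuousLinearMap.id ℝ X‖ ^ 2
            * ‖PNL ((Ψ.comp Sg) (yip1 - ystar))‖ * ‖xip1 - xi‖ ^ 2
        + ((κ - δ) / (2 * (1 - δ))) * ⟪Ψ (yip1 - yi), yip1 - yi⟫
        + (1 / 2) * ∑ j : Fin m,
            (φ j - φ' j + 2 * (if j ∈ S then (1 : ℝ) else 0) * φ j * τ j * (γG j + γK j))
              * ‖P j (xip1 - xstar)‖ ^ 2
        + (1 / 2) * ∑ ℓ : Fin n,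
            (ψ ℓ - ψ' ℓ + 2 * (if ℓ ∈ V then (1 : ℝ) else 0) * ψ ℓ * σ ℓ * γF ℓ)
              * ‖Q ℓ (yip1 - ystar)‖ ^ 2
        + (⟪(Φ.comp T) (ContinuousLinearMap.adjoint (DK xi - DK xstar) ystar),
              xip1 - xstar⟫
            - ⟪((Φ.comp T).comp ΓK) (xip1 - xstar), xip1 - xstar⟫
            + ⟪(Ψ.comp Sg) (K xstar - K xi - DK xi (xstar - xi)), yip1 - ystar⟫)
        + (⟪(Λ' - Λ) (xip1 - xstar), yip1 - ystar⟫
            + ⟪(Φ.comp T) (ContinuousLinearMap.adjoint (DK xi) (yip1 - ystar)),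
                xip1 - xstar⟫
            - ⟪(Ψ.comp Sg) (DK xi (xip1 - xstar)), yip1 - ystar⟫) :=
  stmt7_general P Q hPsa hPidem hPorth hQsa hQidem hQorth xstar xi xip1 ystar yi yip1 Ω xbar hxbar 𝒳
    hconv hxi hxbar𝒳 K DK hdiff L hL hLip PNL hPNLsa hPNLconst A B γG γF hA hB S V τ σ hτ hσ φ φ' ψ
    ψ' hφ hψ T hT Sg hSg Φ Φ'op Ψ Ψ'op hΦ hΦ' hΨ hΨ' Λ Λ' γK ΓK hΓK q q' hq hq' δ κ hmetric
end

section
/- Assume ω̄·σ_ℓ·τ_j ≤ σ⁰_ℓ·τ⁰_j for all ℓ, j, and that for every ℓ = 1,…,n, 1 − κ ≥ ‖Σ_{j∈S} √(w_{j,ℓ}·σ⁰_ℓ·τ⁰_j/π_j)·Q_ℓ K' P_j‖² (operator norm). Then for all x ∈ X and y ∈ Y, ⟨Φx,x⟩ − 2⟨Λx,y⟩ + ⟨Ψy,y⟩ ≥ δ⟨Φx,x⟩ + ((κ−δ)/(1−δ))·⟨Ψy,y⟩. -/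
open scoped RealInnerProductSpace Classical

/-!
Write `v j ℓ = P_j K'^* Q_ℓ y`. Then `⟪Λ x, y⟫ = ∑_{j ∈ S} φ_j τ_j ⟪P_j x, ∑_ℓ v j ℓ⟫`, and Young's
inequality with parameter `1 - δ` reduces the claim to
`∑_{j ∈ S} φ_j τ_j² ‖∑_ℓ v j ℓ‖² ≤ (1 - κ) ⟪Ψ y, y⟫`. Three estimates give this. A weighted Young
inequality over the pairs `(ℓ, k)`, of which only those with `Q_ℓ K' P_j K'^* Q_k ≠ 0` contribute,
bounds `‖∑_ℓ v j ℓ‖²` by `∑_ℓ w_{j,ℓ} ‖v j ℓ‖²`. The step-length conditions give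
`φ_j τ_j² ≤ ψ_ℓ σ⁰_ℓ τ⁰_j / π_j`. Finally, for fixed `ℓ` the vectors `v j ℓ` are mutually
orthogonal, so `∑_j a_j² ‖v j ℓ‖² = ‖A_ℓ^* (Q_ℓ y)‖² ≤ ‖A_ℓ‖² ‖Q_ℓ y‖²` for the operator
`A_ℓ = ∑_{j ∈ S} a_j Q_ℓ K' P_j` of the norm condition.
-/

open Finset ContinuousLinearMap

section InnerProduct

variable {E : Type*} [NormedAddCommGroup E] [InnerProductSpace ℝ E]

lemma two_mul_inner_le_add_mul_sq {t : ℝ} (ht : 0 < t) (u v : E) :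
    2 * ⟪u, v⟫ ≤ t * ‖u‖ ^ 2 + t⁻¹ * ‖v‖ ^ 2 :=
  calc 2 * ⟪u, v⟫ ≤ 2 * ‖u‖ * ‖v‖ := by linarith [real_inner_le_norm u v]
    _ ≤ _ := two_mul_le_add_mul_sq ht

lemma two_mul_sum_mul_inner_le {ι : Type*} (S : Finset ι) {t : ℝ} (ht : 0 < t) {φ : ι → ℝ}
    (hφ : ∀ j, 0 ≤ φ j) (τ : ι → ℝ) (u g : ι → E) :
    2 * ∑ j ∈ S, φ j * τ j * ⟪u j, g j⟫ ≤
      t * ∑ j ∈ S, φ j * ‖u j‖ ^ 2 + t⁻¹ * ∑ j ∈ S, φ j * τ j ^ 2 * ‖g j‖ ^ 2 := by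
  simp only [mul_sum, ← sum_add_distrib]
  refine sum_le_sum fun j _ => ?_
  have h := mul_le_mul_of_nonneg_left (two_mul_inner_le_add_mul_sq ht (u j) (τ j • g j)) (hφ j)
  rw [real_inner_smul_right, norm_smul, mul_pow, Real.norm_eq_abs, sq_abs] at h
  linarith

lemma norm_sum_sq_le_sum_weight_mul_norm_sq {ι : Type*} [Fintype ι] (v : ι → E)
    {R : ι → ι → Prop} [DecidableRel R] (hR : ∀ ℓ k, R ℓ k → R k ℓ)
    (hv : ∀ ℓ k, ¬R ℓ k → ⟪v ℓ, v k⟫ = 0)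
    {w : ι → ι → ℝ} (hw : ∀ ℓ k, 0 < w ℓ k) (hwsymm : ∀ ℓ k, w ℓ k = 1 / w k ℓ) :
    ‖∑ ℓ, v ℓ‖ ^ 2 ≤ ∑ ℓ, (∑ k, if R ℓ k then w ℓ k else 0) * ‖v ℓ‖ ^ 2 := by
  set b : ι → ι → ℝ := fun ℓ k => if R ℓ k then w ℓ k * ‖v ℓ‖ ^ 2 else 0
  have hpair : ∀ ℓ k, 2 * ⟪v ℓ, v k⟫ ≤ b ℓ k + b k ℓ := by
    intro ℓ k
    by_cases h : R ℓ k
    · simpa only [b, if_pos h, if_pos (hR ℓ k h), hwsymm k ℓ, one_div]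
        using two_mul_inner_le_add_mul_sq (hw ℓ k) (v ℓ) (v k)
    · simp only [b, if_neg h, if_neg fun h' => h (hR k ℓ h'), hv ℓ k h]
      norm_num
  calc ‖∑ ℓ, v ℓ‖ ^ 2 = ∑ ℓ, ∑ k, ⟪v ℓ, v k⟫ := by
        rw [← real_inner_self_eq_norm_sq, sum_inner]
        simp only [inner_sum]
    _ ≤ ∑ ℓ, ∑ k, (b ℓ k + b k ℓ) / 2 := by
        gcongr with ℓ _ k _
        linarith [hpair ℓ k]
    _ = ∑ ℓ, ∑ k, b ℓ k := by
        simp only [add_div, sum_add_distrib]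
        rw [sum_comm (f := fun ℓ k => b k ℓ / 2), ← sum_add_distrib]
        simp only [← sum_add_distrib, add_halves]
    _ = _ := by simp only [b, sum_mul, ite_mul, zero_mul]

end InnerProduct

lemma mul_sq_le_of_coupling {π φ τ ψ σ σ₀ τ₀ η η' : ℝ} (hπ : 0 < π) (hψ : 0 ≤ ψ) (hη' : η' ≠ 0)
    (hprimal : π * φ * τ = η) (hdual : ψ * σ = η') (hstep : η / η' * σ * τ ≤ σ₀ * τ₀) :
    φ * τ ^ 2 ≤ ψ * (σ₀ * τ₀ / π) := by
  have h : φ * τ ^ 2 * π = ψ * (η / η' * σ * τ) :=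
    calc φ * τ ^ 2 * π = η * τ * (ψ * σ / η') := by
          rw [hdual, div_self hη', ← hprimal]
          ring
      _ = ψ * (η / η' * σ * τ) := by ring
  rw [← mul_div_assoc, le_div_iff₀ hπ, h]
  exact mul_le_mul_of_nonneg_left hstep hψ

lemma sum_mul_le_sum_mul_of_le_sum {ι ι' : Type*} [Fintype ι'] {S : Finset ι} {c G : ι → ℝ}
    {a : ι → ι' → ℝ} {ψ r : ι' → ℝ} {d : ι' → ι → ℝ} (hc : ∀ j, 0 ≤ c j)
    (ha : ∀ j ℓ, 0 ≤ a j ℓ) (hψ : ∀ ℓ, 0 ≤ ψ ℓ) (hG : ∀ j ∈ S, G j ≤ ∑ ℓ, a j ℓ)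
    (hcd : ∀ ℓ j, c j ≤ ψ ℓ * d ℓ j) (hr : ∀ ℓ, ∑ j ∈ S, d ℓ j * a j ℓ ≤ r ℓ) :
    ∑ j ∈ S, c j * G j ≤ ∑ ℓ, ψ ℓ * r ℓ :=
  calc ∑ j ∈ S, c j * G j ≤ ∑ j ∈ S, ∑ ℓ, ψ ℓ * (d ℓ j * a j ℓ) := by
        refine sum_le_sum fun j hj => (mul_le_mul_of_nonneg_left (hG j hj) (hc j)).trans ?_
        rw [mul_sum]
        exact sum_le_sum fun ℓ _ =>
          (mul_le_mul_of_nonneg_right (hcd ℓ j) (ha j ℓ)).trans_eq (mul_assoc _ _ _)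
    _ = ∑ ℓ, ψ ℓ * ∑ j ∈ S, d ℓ j * a j ℓ := by
        rw [sum_comm]
        simp only [mul_sum]
    _ ≤ ∑ ℓ, ψ ℓ * r ℓ := sum_le_sum fun ℓ _ => mul_le_mul_of_nonneg_left (hr ℓ) (hψ ℓ)

lemma ite_ne_zero_sum_comp_eq {ι E F G : Type*} [Fintype ι] [NormedAddCommGroup E]
    [NormedSpace ℝ E] [NormedAddCommGroup F] [NormedSpace ℝ F] [NormedAddCommGroup G]
    [NormedSpace ℝ G] (A : F →L[ℝ] G) (B : ι → E →L[ℝ] F) (w : ι → ℝ) :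
    (if A ≠ 0 then ∑ k, if A.comp (B k) ≠ 0 then w k else 0 else 0) =
      ∑ k, if A.comp (B k) ≠ 0 then w k else 0 := by
  split_ifs with h
  · rfl
  · simp [not_not.mp h]

section Projections

variable {ι E F : Type*} [NormedAddCommGroup E] [InnerProductSpace ℝ E] [CompleteSpace E]
  [NormedAddCommGroup F] [InnerProductSpace ℝ F] [CompleteSpace F]

lemma isStarProjection_of_inner {p : E →L[ℝ] E} (hsa : ∀ u v, ⟪p u, v⟫ = ⟪u, p v⟫)
    (hidem : p.comp p = p) : IsStarProjection p :=
  ⟨hidem, LinearMap.IsSymmetric.isSelfAdjoint hsa⟩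

lemma IsSelfAdjoint.inner_apply_left {p : E →L[ℝ] E} (hp : IsSelfAdjoint p) (x y : E) :
    ⟪p x, y⟫ = ⟪x, p y⟫ :=
  hp.isSymmetric x y

lemma IsStarProjection.inner_apply_self {p : E →L[ℝ] E} (hp : IsStarProjection p) (x : E) :
    ⟪p x, x⟫ = ‖p x‖ ^ 2 := by
  rw [← real_inner_self_eq_norm_sq, hp.isSelfAdjoint.inner_apply_left x (p x),
    ← mul_apply_eq_comp, hp.isIdempotentElem.eq, real_inner_comm]

lemma inner_sum_smul_apply_self_s8 [Fintype ι] {p : ι → E →L[ℝ] E}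
    (hp : ∀ j, IsStarProjection (p j)) (c : ι → ℝ) (x : E) :
    ⟪(∑ j, c j • p j) x, x⟫ = ∑ j, c j * ‖p j x‖ ^ 2 := by
  simp only [_root_.sum_apply, smul_apply, sum_inner, real_inner_smul_left,
    (hp _).inner_apply_self]

lemma norm_sum_smul_apply_sq {p : ι → E →L[ℝ] E} (hp : ∀ j, IsSelfAdjoint (p j))
    (horth : ∀ j k, j ≠ k → p j * p k = 0) (S : Finset ι) (a : ι → ℝ) (u : E) :
    ‖∑ j ∈ S, a j • p j u‖ ^ 2 = ∑ j ∈ S, a j ^ 2 * ‖p j u‖ ^ 2 := by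
  rw [← real_inner_self_eq_norm_sq, sum_inner]
  refine sum_congr rfl fun j hj => ?_
  rw [inner_sum, sum_eq_single_of_mem j hj fun k _ hkj => ?_]
  · rw [real_inner_smul_left, real_inner_smul_right, real_inner_self_eq_norm_sq]
    ring
  · rw [real_inner_smul_left, real_inner_smul_right, (hp j).inner_apply_left,
      ← mul_apply_eq_comp, horth j k hkj.symm, zero_apply, inner_zero_right, mul_zero, mul_zero]

lemma sum_sq_mul_norm_apply_adjoint_sq_le {p : ι → E →L[ℝ] E} (hp : ∀ j, IsSelfAdjoint (p j))
    (horth : ∀ j k, j ≠ k → p j * p k = 0) (S : Finset ι) (a : ι → ℝ) (T : E →L[ℝ] F) (z : F) :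
    ∑ j ∈ S, a j ^ 2 * ‖p j (adjoint T z)‖ ^ 2 ≤ ‖∑ j ∈ S, a j • T.comp (p j)‖ ^ 2 * ‖z‖ ^ 2 := by
  set A := ∑ j ∈ S, a j • T.comp (p j)
  have hA : adjoint A z = ∑ j ∈ S, a j • p j (adjoint T z) := by
    simp [A, map_sum, adjoint_comp, (hp _).adjoint_eq]
  rw [← norm_sum_smul_apply_sq hp horth, ← hA, ← mul_pow]
  gcongr
  simpa using (adjoint A).le_opNorm z

end Projections

section Blocks

variable {ι ι' E F : Type*} [NormedAddCommGroup E] [InnerProductSpace ℝ E] [CompleteSpace E]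
  [NormedAddCommGroup F] [InnerProductSpace ℝ F] [CompleteSpace F]

lemma inner_comp_comp_apply {p : E →L[ℝ] E} (hp : IsStarProjection p) {q : F →L[ℝ] F}
    (hq : IsSelfAdjoint q) (K : E →L[ℝ] F) (x : E) (y : F) :
    ⟪q.comp (K.comp p) x, y⟫ = ⟪p x, p (adjoint K (q y))⟫ := by
  rw [comp_apply, comp_apply, hq.inner_apply_left, ← adjoint_inner_right,
    ← hp.isSelfAdjoint.inner_apply_left, ← mul_apply_eq_comp, hp.isIdempotentElem.eq]

lemma inner_sum_sum_smul_comp_comp_apply [Fintype ι'] {p : ι → E →L[ℝ] E}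
    (hp : ∀ j, IsStarProjection (p j)) {q : ι' → F →L[ℝ] F} (hq : ∀ ℓ, IsSelfAdjoint (q ℓ))
    (K : E →L[ℝ] F) (S : Finset ι) (c : ι → ℝ) (x : E) (y : F) :
    ⟪(∑ ℓ, ∑ j ∈ S, c j • (q ℓ).comp (K.comp (p j))) x, y⟫ =
      ∑ j ∈ S, c j * ⟪p j x, ∑ ℓ, p j (adjoint K (q ℓ y))⟫ := by
  simp only [_root_.sum_apply, smul_apply, sum_inner, real_inner_smul_left,
    inner_comp_comp_apply (hp _) (hq _), inner_sum, mul_sum]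
  exact sum_comm

lemma two_mul_inner_sum_sum_smul_comp_comp_apply_le [Fintype ι] [Fintype ι'] {p : ι → E →L[ℝ] E}
    (hp : ∀ j, IsStarProjection (p j)) {q : ι' → F →L[ℝ] F} (hq : ∀ ℓ, IsSelfAdjoint (q ℓ))
    (K : E →L[ℝ] F) (S : Finset ι) {φ : ι → ℝ} (hφ : ∀ j, 0 ≤ φ j) (τ : ι → ℝ) {t : ℝ}
    (ht : 0 < t) (x : E) (y : F) :
    2 * ⟪(∑ ℓ, ∑ j ∈ S, (φ j * τ j) • (q ℓ).comp (K.comp (p j))) x, y⟫ ≤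
      t * ⟪(∑ j, φ j • p j) x, x⟫ +
        t⁻¹ * ∑ j ∈ S, φ j * τ j ^ 2 * ‖∑ ℓ, p j (adjoint K (q ℓ y))‖ ^ 2 := by
  rw [inner_sum_sum_smul_comp_comp_apply hp hq, inner_sum_smul_apply_self_s8 hp]
  refine (two_mul_sum_mul_inner_le S ht hφ τ (fun j => p j x) _).trans ?_
  gcongr
  · exact fun j _ _ => mul_nonneg (hφ j) (sq_nonneg _)
  · exact subset_univ S

lemma inner_apply_adjoint_apply {p : E →L[ℝ] E} (hp : IsStarProjection p) {q q' : F →L[ℝ] F}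
    (hq : IsSelfAdjoint q) (K : E →L[ℝ] F) (y : F) :
    ⟪p (adjoint K (q y)), p (adjoint K (q' y))⟫ =
      ⟪y, ((q.comp (K.comp p)).comp ((adjoint K).comp q')) y⟫ := by
  rw [comp_apply (q.comp (K.comp p)), comp_apply (adjoint K) q', real_inner_comm _ y,
    inner_comp_comp_apply hp hq, real_inner_comm]

lemma adjoint_comp_comp_adjoint_comp {p : E →L[ℝ] E} (hp : IsSelfAdjoint p)
    {q q' : F →L[ℝ] F} (hq : IsSelfAdjoint q) (hq' : IsSelfAdjoint q') (K : E →L[ℝ] F) :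
    adjoint ((q.comp (K.comp p)).comp ((adjoint K).comp q')) =
      (q'.comp (K.comp p)).comp ((adjoint K).comp q) := by
  simp only [adjoint_comp, adjoint_adjoint, hp.adjoint_eq, hq.adjoint_eq, hq'.adjoint_eq]
  rfl

lemma norm_sum_apply_adjoint_apply_sq_le [Fintype ι'] {p : E →L[ℝ] E} (hp : IsStarProjection p)
    {q : ι' → F →L[ℝ] F} (hq : ∀ ℓ, IsSelfAdjoint (q ℓ)) (K : E →L[ℝ] F)
    {w : ι' → ι' → ℝ} (hw : ∀ ℓ k, 0 < w ℓ k) (hwsymm : ∀ ℓ k, w ℓ k = 1 / w k ℓ) (y : F) :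
    ‖∑ ℓ, p (adjoint K (q ℓ y))‖ ^ 2 ≤
      ∑ ℓ, (∑ k, if ((q ℓ).comp (K.comp p)).comp ((adjoint K).comp (q k)) ≠ 0 then w ℓ k else 0) *
        ‖p (adjoint K (q ℓ y))‖ ^ 2 := by
  refine norm_sum_sq_le_sum_weight_mul_norm_sq (fun ℓ => p (adjoint K (q ℓ y)))
    (R := fun ℓ k => ((q ℓ).comp (K.comp p)).comp ((adjoint K).comp (q k)) ≠ 0)
    (fun ℓ k h h' => h ?_) (fun ℓ k h => ?_) hw hwsymm
  · rw [← adjoint_comp_comp_adjoint_comp hp.isSelfAdjoint (hq k) (hq ℓ), h', map_zero]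
  · rw [inner_apply_adjoint_apply hp (hq ℓ), not_not.mp h, zero_apply, inner_zero_right]

lemma sum_mul_norm_apply_adjoint_sq_le {p : ι → E →L[ℝ] E} (hp : ∀ j, IsSelfAdjoint (p j))
    (horth : ∀ j k, j ≠ k → p j * p k = 0) {q : F →L[ℝ] F} (hq : IsStarProjection q)
    (K : E →L[ℝ] F) (S : Finset ι) {c : ι → ℝ} (hc : ∀ j, 0 ≤ c j) (y : F) :
    ∑ j ∈ S, c j * ‖p j (adjoint K (q y))‖ ^ 2 ≤
      ‖∑ j ∈ S, √(c j) • q.comp (K.comp (p j))‖ ^ 2 * ‖q y‖ ^ 2 := by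
  have hqq : adjoint (q.comp K) (q y) = adjoint K (q y) := by
    rw [adjoint_comp, hq.isSelfAdjoint.adjoint_eq, comp_apply, ← mul_apply_eq_comp,
      hq.isIdempotentElem.eq]
  simpa only [Real.sq_sqrt (hc _), hqq, comp_assoc] using
    sum_sq_mul_norm_apply_adjoint_sq_le hp horth S (fun j => √(c j)) (q.comp K) (q y)

end Blocks

theorem stmt8_general {X Y : Type*}
    [NormedAddCommGroup X] [InnerProductSpace ℝ X] [CompleteSpace X]
    [NormedAddCommGroup Y] [InnerProductSpace ℝ Y] [CompleteSpace Y]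
    {m n : ℕ}
    (P : Fin m → X →L[ℝ] X) (Q : Fin n → Y →L[ℝ] Y)
    (hPsa : ∀ j, ∀ u v : X, ⟪P j u, v⟫ = ⟪u, P j v⟫)
    (hPidem : ∀ j, (P j).comp (P j) = P j)
    (hPorth : ∀ j j', j ≠ j' → (P j).comp (P j') = 0)
    (hQsa : ∀ ℓ, ∀ u v : Y, ⟪Q ℓ u, v⟫ = ⟪u, Q ℓ v⟫)
    (hQidem : ∀ ℓ, (Q ℓ).comp (Q ℓ) = Q ℓ)
    (K' : X →L[ℝ] Y)
    (S : Finset (Fin m))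
    (π : Fin m → ℝ) (hπ : ∀ j, 0 < π j)
    (φ τ : Fin m → ℝ) (hφ : ∀ j, 0 < φ j)
    (ψ σ : Fin n → ℝ) (hψ : ∀ ℓ, 0 < ψ ℓ)
    (η η' : ℝ) (hη' : 0 < η')
    (hcoupleP : ∀ j, π j * φ j * τ j = η)
    (hcoupleD : ∀ ℓ, ψ ℓ * σ ℓ = η')
    (τ0 : Fin m → ℝ) (σ0 : Fin n → ℝ)
    (hτ0 : ∀ j, 0 < τ0 j) (hσ0 : ∀ ℓ, 0 < σ0 ℓ)
    (w : Fin m → Fin n → Fin n → ℝ)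
    (hwpos : ∀ j ℓ k, 0 < w j ℓ k)
    (hwsym : ∀ j ℓ k, w j ℓ k = 1 / w j k ℓ)
    (wtot : Fin m → Fin n → ℝ)
    (hwtot : ∀ j ℓ, wtot j ℓ =
      if (Q ℓ).comp (K'.comp (P j)) ≠ 0 then
        ∑ k : Fin n,
          (if ((Q ℓ).comp (K'.comp (P j))).comp
                ((ContinuousLinearMap.adjoint K').comp (Q k)) ≠ 0 ∧ j ∈ S
            then w j ℓ k else 0)
      else 0)
    (δ κ : ℝ) (hδκ : δ ≤ κ) (hκ : κ < 1)
    (Φ : X →L[ℝ] X) (Ψ : Y →L[ℝ] Y) (Λ : X →L[ℝ] Y)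
    (hΦ : Φ = ∑ j : Fin m, φ j • P j)
    (hΨ : Ψ = ∑ ℓ : Fin n, ψ ℓ • Q ℓ)
    (hΛ : Λ = ∑ ℓ : Fin n, ∑ j ∈ S, (φ j * τ j) • ((Q ℓ).comp (K'.comp (P j))))
    (hsteps : ∀ (ℓ : Fin n) (j : Fin m), (η / η') * σ ℓ * τ j ≤ σ0 ℓ * τ0 j)
    (hcond : ∀ ℓ, 1 - κ ≥
      ‖∑ j ∈ S, Real.sqrt (wtot j ℓ * σ0 ℓ * τ0 j / π j) •
          ((Q ℓ).comp (K'.comp (P j)))‖ ^ 2) :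
    ∀ (x : X) (y : Y),
      ⟪Φ x, x⟫ - 2 * ⟪Λ x, y⟫ + ⟪Ψ y, y⟫ ≥
        δ * ⟪Φ x, x⟫ + ((κ - δ) / (1 - δ)) * ⟪Ψ y, y⟫ := by
  intro x y
  have hP : ∀ j, IsStarProjection (P j) := fun j => isStarProjection_of_inner (hPsa j) (hPidem j)
  have hQ : ∀ ℓ, IsStarProjection (Q ℓ) := fun ℓ => isStarProjection_of_inner (hQsa ℓ) (hQidem ℓ)
  set v : Fin m → Fin n → X := fun j ℓ => P j (adjoint K' (Q ℓ y))
  have hwtot_nonneg : ∀ j ℓ, 0 ≤ wtot j ℓ := fun j ℓ => by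
    rw [hwtot]
    split_ifs
    exacts [sum_nonneg fun k _ => by split_ifs <;> simp [(hwpos j ℓ k).le], le_rfl]
  have hcross : ∀ j ∈ S, ‖∑ ℓ, v j ℓ‖ ^ 2 ≤ ∑ ℓ, wtot j ℓ * ‖v j ℓ‖ ^ 2 := fun j hj =>
    (norm_sum_apply_adjoint_apply_sq_le (hP j) (fun ℓ => (hQ ℓ).isSelfAdjoint) K' (hwpos j)
      (hwsym j) y).trans_eq <| sum_congr rfl fun ℓ _ => by
        simp only [hwtot, hj, and_true, ite_ne_zero_sum_comp_eq, v]
  have hblock : ∀ ℓ, ∑ j ∈ S, σ0 ℓ * τ0 j / π j * (wtot j ℓ * ‖v j ℓ‖ ^ 2) ≤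
      (1 - κ) * ‖Q ℓ y‖ ^ 2 := fun ℓ =>
    le_of_eq_of_le (sum_congr rfl fun j _ => by ring) <|
      (sum_mul_norm_apply_adjoint_sq_le (fun j => (hP j).isSelfAdjoint) hPorth (hQ ℓ) K' S
        (fun j => div_nonneg (mul_nonneg (mul_nonneg (hwtot_nonneg j ℓ) (hσ0 ℓ).le) (hτ0 j).le)
          (hπ j).le) y).trans (mul_le_mul_of_nonneg_right (hcond ℓ) (sq_nonneg _))
  have hdual : ∑ j ∈ S, φ j * τ j ^ 2 * ‖∑ ℓ, v j ℓ‖ ^ 2 ≤ (1 - κ) * ⟪Ψ y, y⟫ := by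
    refine (sum_mul_le_sum_mul_of_le_sum (fun j => mul_nonneg (hφ j).le (sq_nonneg (τ j)))
      (fun j ℓ => mul_nonneg (hwtot_nonneg j ℓ) (sq_nonneg ‖v j ℓ‖)) (fun ℓ => (hψ ℓ).le) hcross
      (fun ℓ j => mul_sq_le_of_coupling (hπ j) (hψ ℓ).le hη'.ne' (hcoupleP j) (hcoupleD ℓ)
        (hsteps ℓ j)) hblock).trans_eq ?_
    rw [hΨ, inner_sum_smul_apply_self_s8 hQ, mul_sum]
    exact sum_congr rfl fun ℓ _ => by ring
  have hδ1 : 0 < 1 - δ := by linarith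
  have hΛxy : 2 * ⟪Λ x, y⟫ ≤ (1 - δ) * ⟪Φ x, x⟫ + (1 - κ) / (1 - δ) * ⟪Ψ y, y⟫ := by
    rw [hΛ, hΦ, div_eq_inv_mul, mul_assoc]
    refine (two_mul_inner_sum_sum_smul_comp_comp_apply_le hP (fun ℓ => (hQ ℓ).isSelfAdjoint)
      K' S (fun j => (hφ j).le) τ hδ1 x y).trans ?_
    gcongr
  rw [ge_iff_le, show (κ - δ) / (1 - δ) = 1 - (1 - κ) / (1 - δ) by field_simp; ring]
  linarith

/-- Step-length condition for the full-dual-update method (Lemma 4.1) implies the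
lower bound on the local metric. -/
theorem stmt8 {X Y : Type*}
    [NormedAddCommGroup X] [InnerProductSpace ℝ X] [CompleteSpace X]
    [NormedAddCommGroup Y] [InnerProductSpace ℝ Y] [CompleteSpace Y]
    {m n : ℕ}
    (P : Fin m → X →L[ℝ] X) (Q : Fin n → Y →L[ℝ] Y)
    (hPsa : ∀ j, ∀ u v : X, ⟪P j u, v⟫ = ⟪u, P j v⟫)
    (hPidem : ∀ j, (P j).comp (P j) = P j)
    (hPorth : ∀ j j', j ≠ j' → (P j).comp (P j') = 0)
    (hQsa : ∀ ℓ, ∀ u v : Y, ⟪Q ℓ u, v⟫ = ⟪u, Q ℓ v⟫)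
    (hQidem : ∀ ℓ, (Q ℓ).comp (Q ℓ) = Q ℓ)
    (hQorth : ∀ ℓ ℓ', ℓ ≠ ℓ' → (Q ℓ).comp (Q ℓ') = 0)
    (K' : X →L[ℝ] Y)
    (S : Finset (Fin m))
    (π : Fin m → ℝ) (hπ : ∀ j, 0 < π j) (hπ1 : ∀ j, π j ≤ 1)
    (φ τ : Fin m → ℝ) (hφ : ∀ j, 0 < φ j) (hτ : ∀ j, 0 < τ j)
    (ψ σ : Fin n → ℝ) (hψ : ∀ ℓ, 0 < ψ ℓ) (hσ : ∀ ℓ, 0 < σ ℓ)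
    (η η' : ℝ) (hη : 0 < η) (hη' : 0 < η')
    (hcoupleP : ∀ j, π j * φ j * τ j = η)
    (hcoupleD : ∀ ℓ, ψ ℓ * σ ℓ = η')
    (hω : η / η' ≤ 1)
    (τ0 : Fin m → ℝ) (σ0 : Fin n → ℝ)
    (hτ0 : ∀ j, 0 < τ0 j) (hσ0 : ∀ ℓ, 0 < σ0 ℓ)
    (w : Fin m → Fin n → Fin n → ℝ)
    (hwpos : ∀ j ℓ k, 0 < w j ℓ k)
    (hwsym : ∀ j ℓ k, w j ℓ k = 1 / w j k ℓ)
    (wtot : Fin m → Fin n → ℝ)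
    (hwtot : ∀ j ℓ, wtot j ℓ =
      if (Q ℓ).comp (K'.comp (P j)) ≠ 0 then
        ∑ k : Fin n,
          (if ((Q ℓ).comp (K'.comp (P j))).comp
                ((ContinuousLinearMap.adjoint K').comp (Q k)) ≠ 0 ∧ j ∈ S
            then w j ℓ k else 0)
      else 0)
    (δ κ : ℝ) (hδ : 0 ≤ δ) (hδκ : δ ≤ κ) (hκ : κ < 1)
    (Φ : X →L[ℝ] X) (Ψ : Y →L[ℝ] Y) (Λ : X →L[ℝ] Y)
    (hΦ : Φ = ∑ j : Fin m, φ j • P j)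
    (hΨ : Ψ = ∑ ℓ : Fin n, ψ ℓ • Q ℓ)
    (hΛ : Λ = ∑ ℓ : Fin n, ∑ j ∈ S, (φ j * τ j) • ((Q ℓ).comp (K'.comp (P j))))
    (hsteps : ∀ (ℓ : Fin n) (j : Fin m), (η / η') * σ ℓ * τ j ≤ σ0 ℓ * τ0 j)
    (hcond : ∀ ℓ, 1 - κ ≥
      ‖∑ j ∈ S, Real.sqrt (wtot j ℓ * σ0 ℓ * τ0 j / π j) •
          ((Q ℓ).comp (K'.comp (P j)))‖ ^ 2) :
    ∀ (x : X) (y : Y),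
      ⟪Φ x, x⟫ - 2 * ⟪Λ x, y⟫ + ⟪Ψ y, y⟫ ≥
        δ * ⟪Φ x, x⟫ + ((κ - δ) / (1 - δ)) * ⟪Ψ y, y⟫ :=
  stmt8_general P Q hPsa hPidem hPorth hQsa hQidem K' S π hπ φ τ hφ ψ σ hψ η η' hη' hcoupleP
    hcoupleD τ0 σ0 hτ0 hσ0 w hwpos hwsym wtot hwtot δ κ hδκ hκ Φ Ψ Λ hΦ hΨ hΛ hsteps hcond
end

section
/- If z_j^{i+1} = (1 + z_j^i)/√(1 + 1/z̄_i) for all j = 1,…,m and i = 0,…,N−1, then z̄_N ≤ z̄_0 + N/2. -/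
/-! Since `1 + 1/x = (1 + x)/x`, one step of the recursion sends `x ↦ √(x (1 + x)) ≤ x + 1/2`,
and it is monotone in the coordinate; so the maximum grows by at most `1/2` per step. -/

theorem div_sqrt_one_add_inv_le {x : ℝ} (hx : 0 < x) :
    (1 + x) / √(1 + 1 / x) ≤ x + 1 / 2 := by
  have h : (1 + x) / √(1 + 1 / x) = √(x * (1 + x)) := by
    rw [div_eq_iff (by positivity), ← Real.sqrt_mul (by positivity)]
    rw [show x * (1 + x) * (1 + 1 / x) = (1 + x) ^ 2 by field_simp; ring]
    exact (Real.sqrt_sq (by positivity)).symm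
  rw [h, Real.sqrt_le_left (by positivity)]
  nlinarith

theorem Finset.sup'_div_sqrt_one_add_inv_sup'_le {ι : Type*} {s : Finset ι} (hs : s.Nonempty)
    {z : ι → ℝ} (hz : ∀ j ∈ s, 0 < z j) :
    s.sup' hs (fun j ↦ (1 + z j) / √(1 + 1 / s.sup' hs z)) ≤ s.sup' hs z + 1 / 2 := by
  obtain ⟨j₀, hj₀⟩ := id hs
  have hpos : 0 < s.sup' hs z := (hz j₀ hj₀).trans_le (s.le_sup' z hj₀)
  refine Finset.sup'_le hs _ fun j hj ↦ ?_
  calc (1 + z j) / √(1 + 1 / s.sup' hs z)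
      ≤ (1 + s.sup' hs z) / √(1 + 1 / s.sup' hs z) := by
        gcongr
        exact s.le_sup' z hj
    _ ≤ s.sup' hs z + 1 / 2 := div_sqrt_one_add_inv_le hpos

theorem le_add_mul_of_forall_succ_le {a : ℕ → ℝ} {d : ℝ} {N : ℕ}
    (h : ∀ i < N, a (i + 1) ≤ a i + d) : a N ≤ a 0 + N * d := by
  induction N with
  | zero => simp
  | succ n ih =>
    have := ih fun i hi ↦ h i (Nat.lt_succ_of_lt hi)
    push_cast
    linarith [h n n.lt_succ_self]

/-- Technical lemma (Lemma B.2): the recursion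
`z_j^{i+1} = (1 + z_j^i)/√(1 + 1/z̄_i)` gives `z̄_N ≤ z̄_0 + N/2`. -/
theorem stmt11 {m : ℕ} [Nonempty (Fin m)] (N : ℕ)
    (z : ℕ → Fin m → ℝ)
    (hz : ∀ i ≤ N, ∀ j, 0 < z i j)
    (zbar : ℕ → ℝ)
    (hzbar : ∀ i, zbar i = Finset.univ.sup' Finset.univ_nonempty (z i))
    (hrec : ∀ i < N, ∀ j,
      z (i + 1) j = (1 + z i j) / Real.sqrt (1 + 1 / zbar i)) :
    zbar N ≤ zbar 0 + N / 2 := by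
  have hstep : ∀ i < N, zbar (i + 1) ≤ zbar i + 1 / 2 := by
    intro i hi
    have hnext : z (i + 1) = fun j ↦ (1 + z i j) / √(1 + 1 / zbar i) := funext (hrec i hi)
    rw [hzbar (i + 1), hnext, hzbar i]
    exact Finset.sup'_div_sqrt_one_add_inv_sup'_le _ fun j _ ↦ hz i hi.le j
  have := le_add_mul_of_forall_succ_le hstep
  linarith
end

section
/- For every N ≥ 0 and every j = 1,…,m, φ_j^N ≥ ((2z̄_0 + N + 1)(2z̄_0 + N))/((2z̄_0 + 1)·2z̄_0)·φ_j^0; in particular each test parameter φ_j^N grows at least quadratically in the iteration count N. -/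
/-!
Write `z_j^i := 1 / (2 τ_j^i γ_j)`. The step-length rule becomes `z_j^{i+1} = (z_j^i + 1) ω^i`, and
`ω^i ≤ (1 + 1 / z̄_i)^{-1/2}` for `z̄_i := max_j z_j^i`, so
`z̄_{i+1} ≤ (z̄_i + 1) / √(1 + 1 / z̄_i) = √(z̄_i (z̄_i + 1)) ≤ z̄_i + 1/2`, i.e. `z̄_i ≤ z̄_0 + i/2`.
Hence `φ_j^{i+1} / φ_j^i = 1 + 1 / z_j^i ≥ 1 + 2 / (2 z̄_0 + i)`, and the product of these
lower bounds telescopes to `(2 z̄_0 + N + 1)(2 z̄_0 + N) / ((2 z̄_0 + 1) 2 z̄_0)`.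
-/

open Finset

theorem quadratic_growth_of_step {a : ℝ} (ha : 0 < a) {u c : ℕ → ℝ} (hu0 : 0 ≤ u 0)
    (hu : ∀ i, u (i + 1) = c i * u i) (hc : ∀ i, 1 + 2 / (a + i) ≤ c i) (N : ℕ) :
    (a + N + 1) * (a + N) / ((a + 1) * a) * u 0 ≤ u N := by
  induction N with
  | zero => simp [div_self (by positivity : (a + 1) * a ≠ 0)]
  | succ N ih =>
    have huN : 0 ≤ u N := le_trans (by positivity) ih
    have hratio : (a + ↑(N + 1) + 1) * (a + ↑(N + 1)) / ((a + 1) * a)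
        = (1 + 2 / (a + N)) * ((a + N + 1) * (a + N) / ((a + 1) * a)) := by
      push_cast
      field_simp
      ring
    calc (a + ↑(N + 1) + 1) * (a + ↑(N + 1)) / ((a + 1) * a) * u 0
        = (1 + 2 / (a + N)) * ((a + N + 1) * (a + N) / ((a + 1) * a) * u 0) := by
          rw [hratio, mul_assoc]
      _ ≤ (1 + 2 / (a + N)) * u N := by gcongr
      _ ≤ c N * u N := by gcongr; exact hc N
      _ = u (N + 1) := (hu N).symm

theorem add_one_mul_inv_sqrt_one_add_inv_le {z : ℝ} (hz : 0 < z) :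
    (z + 1) * (√(1 + z⁻¹))⁻¹ ≤ z + 1 / 2 := by
  set s := √(1 + z⁻¹)
  have hs : 0 < s := Real.sqrt_pos.mpr (by positivity)
  have hs2 : s ^ 2 * z = z + 1 := by
    rw [Real.sq_sqrt (by positivity)]
    field_simp
  rw [mul_inv_le_iff₀ hs]
  -- `(z + 1) / s = √(z (z + 1))`, and `z (z + 1) ≤ (z + 1/2)²`
  nlinarith [sq_nonneg (s * z - (z + 1 / 2))]

namespace FullDualUpdate

variable {ι : Type*} [Fintype ι] [Nonempty ι] {γ t : ι → ℝ}

noncomputable def zbar (γ t : ι → ℝ) : ℝ :=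
  univ.sup' univ_nonempty fun j => 1 / (2 * t j * γ j)

noncomputable def omegaOf (γ t : ι → ℝ) : ℝ :=
  univ.sup' univ_nonempty fun j => (√(1 + 2 * t j * γ j))⁻¹

theorem one_div_le_zbar (j : ι) : 1 / (2 * t j * γ j) ≤ zbar γ t :=
  le_sup' (fun j => 1 / (2 * t j * γ j)) (mem_univ j)

section Positive

variable (hγ : ∀ j, 0 < γ j) (ht : ∀ j, 0 < t j)
include hγ ht

theorem zbar_pos : 0 < zbar γ t := by
  obtain ⟨j⟩ := ‹Nonempty ι›
  have := hγ j; have := ht j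
  exact lt_of_lt_of_le (by positivity) (one_div_le_zbar j)

theorem inv_zbar_le (j : ι) : (zbar γ t)⁻¹ ≤ 2 * t j * γ j := by
  have := hγ j; have := ht j
  rw [inv_le_comm₀ (zbar_pos hγ ht) (by positivity), ← one_div]
  exact one_div_le_zbar j

theorem omegaOf_pos : 0 < omegaOf γ t := by
  obtain ⟨j⟩ := ‹Nonempty ι›
  have := hγ j; have := ht j
  exact lt_of_lt_of_le (by positivity)
    (le_sup' (fun j => (√(1 + 2 * t j * γ j))⁻¹) (mem_univ j))

theorem omegaOf_le : omegaOf γ t ≤ (√(1 + (zbar γ t)⁻¹))⁻¹ := by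
  refine sup'_le _ _ fun j _ => ?_
  have := zbar_pos hγ ht
  gcongr
  exact inv_zbar_le hγ ht j

theorem zbar_next_le :
    zbar γ (fun j => t j / ((1 + 2 * t j * γ j) * omegaOf γ t)) ≤ zbar γ t + 1 / 2 := by
  have hz := zbar_pos hγ ht
  have hw := omegaOf_pos hγ ht
  refine sup'_le _ _ fun j _ => ?_
  have := hγ j; have := ht j
  calc 1 / (2 * (t j / ((1 + 2 * t j * γ j) * omegaOf γ t)) * γ j)
      = (1 / (2 * t j * γ j) + 1) * omegaOf γ t := by field_simp
    _ ≤ (zbar γ t + 1) * (√(1 + (zbar γ t)⁻¹))⁻¹ := by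
        gcongr
        · exact one_div_le_zbar j
        · exact omegaOf_le hγ ht
    _ ≤ zbar γ t + 1 / 2 := add_one_mul_inv_sqrt_one_add_inv_le hz

end Positive

section Iteration

variable {τ : ℕ → ι → ℝ} (hγ : ∀ j, 0 < γ j) (hτ0 : ∀ j, 0 < τ 0 j)
  (hτrec : ∀ i j, τ (i + 1) j = τ i j / ((1 + 2 * τ i j * γ j) * omegaOf γ (τ i)))
include hγ hτ0 hτrec

theorem iterate_pos : ∀ i j, 0 < τ i j := by
  intro i
  induction i with
  | zero => exact hτ0
  | succ i ih =>
    intro j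
    have := hγ j; have := ih j; have := omegaOf_pos hγ ih
    rw [hτrec]
    positivity

theorem zbar_iterate_le (i : ℕ) : zbar γ (τ i) ≤ zbar γ (τ 0) + i / 2 := by
  induction i with
  | zero => simp
  | succ i ih =>
    have hstep : zbar γ (τ (i + 1)) ≤ zbar γ (τ i) + 1 / 2 := by
      rw [show τ (i + 1) = _ from funext (hτrec i)]
      exact zbar_next_le hγ (iterate_pos hγ hτ0 hτrec i)
    push_cast
    linarith

theorem two_div_le_iterate (i : ℕ) (j : ι) :
    2 / (2 * zbar γ (τ 0) + i) ≤ 2 * τ i j * γ j := by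
  have hz := zbar_pos hγ (iterate_pos hγ hτ0 hτrec i)
  calc 2 / (2 * zbar γ (τ 0) + i) = (zbar γ (τ 0) + i / 2)⁻¹ := by
        field_simp
    _ ≤ (zbar γ (τ i))⁻¹ := inv_anti₀ hz (zbar_iterate_le hγ hτ0 hτrec i)
    _ ≤ 2 * τ i j * γ j := inv_zbar_le hγ (iterate_pos hγ hτ0 hτrec i) j

end Iteration

end FullDualUpdate

open FullDualUpdate in
/-- Quadratic growth of the testing parameters `φ_j^N` under the accelerated step-length
rules of the full-dual-update method. -/
theorem stmt12 {m : ℕ} [Nonempty (Fin m)]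
    (γ τ0 φ0 : Fin m → ℝ)
    (hγ : ∀ j, 0 < γ j) (hτ0 : ∀ j, 0 < τ0 j) (hφ0 : ∀ j, 0 < φ0 j)
    (τ φ : ℕ → Fin m → ℝ) (ω : ℕ → ℝ)
    (hτinit : τ 0 = τ0) (hφinit : φ 0 = φ0)
    (hω : ∀ i, ω i = Finset.univ.sup' Finset.univ_nonempty
      (fun j => (Real.sqrt (1 + 2 * τ i j * γ j))⁻¹))
    (hτrec : ∀ i j, τ (i + 1) j = τ i j / ((1 + 2 * τ i j * γ j) * ω i))
    (hφrec : ∀ i j, φ (i + 1) j = (1 + 2 * τ i j * γ j) * φ i j)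
    (zbar0 : ℝ)
    (hzbar0 : zbar0 = Finset.univ.sup' Finset.univ_nonempty
      (fun j => 1 / (2 * τ0 j * γ j))) :
    ∀ (N : ℕ) (j : Fin m),
      φ N j ≥ ((2 * zbar0 + N + 1) * (2 * zbar0 + N))
        / ((2 * zbar0 + 1) * (2 * zbar0)) * φ0 j := by
  intro N j
  subst hτinit hφinit
  have hτrec' : ∀ i j, τ (i + 1) j = τ i j / ((1 + 2 * τ i j * γ j) * omegaOf γ (τ i)) :=
    fun i j => by rw [hτrec, hω]; rfl
  have hzbar0 : zbar0 = zbar γ (τ 0) := hzbar0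
  subst hzbar0
  exact quadratic_growth_of_step (u := (φ · j)) (c := fun i => 1 + 2 * τ i j * γ j)
    (by linarith [zbar_pos hγ hτ0]) (hφ0 j).le (fun i => hφrec i j)
    (fun i => by linarith [two_div_le_iterate hγ hτ0 hτrec' i j]) N
end

section
/- For every i ≥ 0, ω̄ = max{ max_{j=1,…,m} (1 + 2τ_j^i γ̃_j)^{−1}, max_{ℓ=1,…,n} (1 + 2σ_ℓ^i γ̄_ℓ)^{−1} }; consequently the step lengths are non-increasing: τ_j^{i+1} ≤ τ_j^i and σ_ℓ^{i+1} ≤ σ_ℓ^i for all i, j, ℓ. -/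
/-!
Write `a := (1 + 2 τ γ)⁻¹` for one step length `τ` with its constant `γ`. Since
`2 τ γ / (1 + 2 τ γ) = 1 - a`, one step of the rule replaces `a` by `ω̄ / (ω̄ + 1 - a)`. This map
sends `(0, ω̄]` into itself and fixes `ω̄`, so the coordinates attaining the maximum `ω̄` keep
attaining it and all others stay below it. Finally `a ≤ ω̄` means `(1 + 2 τ γ) ω̄ ≥ 1`, i.e. the
step length does not grow.
-/

theorem eq_max_sup'_iff {α ι κ : Type*} [LinearOrder α] {s : Finset ι} {t : Finset κ}
    (hs : s.Nonempty) (ht : t.Nonempty) (a : ι → α) (b : κ → α) (ω : α) :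
    ω = max (s.sup' hs a) (t.sup' ht b) ↔
      (∀ i ∈ s, a i ≤ ω) ∧ (∀ k ∈ t, b k ≤ ω) ∧ ((∃ i ∈ s, a i = ω) ∨ (∃ k ∈ t, b k = ω)) := by
  constructor
  · rintro rfl
    refine ⟨fun i hi => (s.le_sup' a hi).trans (le_max_left _ _),
      fun k hk => (t.le_sup' b hk).trans (le_max_right _ _), ?_⟩
    obtain ⟨i, hi, hai⟩ := s.exists_mem_eq_sup' hs a
    obtain ⟨k, hk, hbk⟩ := t.exists_mem_eq_sup' ht b
    rcases max_choice (s.sup' hs a) (t.sup' ht b) with h | h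
    · exact Or.inl ⟨i, hi, by rw [h, hai]⟩
    · exact Or.inr ⟨k, hk, by rw [h, hbk]⟩
  · rintro ⟨ha, hb, (⟨i, hi, hai⟩ | ⟨k, hk, hbk⟩)⟩ <;>
      refine le_antisymm ?_ (max_le ((s.sup'_le_iff hs a).2 ha) ((t.sup'_le_iff ht b).2 hb))
    · exact hai ▸ (s.le_sup' a hi).trans (le_max_left _ _)
    · exact hbk ▸ (t.le_sup' b hk).trans (le_max_right _ _)

theorem eq_max_sup'_of_map {α ι κ : Type*} [LinearOrder α] {s : Finset ι} {t : Finset κ}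
    (hs : s.Nonempty) (ht : t.Nonempty) {a a' : ι → α} {b b' : κ → α} {ω : α} (f : α → α)
    (hf_le : ∀ x ≤ ω, f x ≤ ω) (hf_fix : f ω = ω)
    (ha' : ∀ i ∈ s, a' i = f (a i)) (hb' : ∀ k ∈ t, b' k = f (b k))
    (h : ω = max (s.sup' hs a) (t.sup' ht b)) :
    ω = max (s.sup' hs a') (t.sup' ht b') := by
  rw [eq_max_sup'_iff] at h ⊢
  obtain ⟨ha, hb, (⟨i, hi, hai⟩ | ⟨k, hk, hbk⟩)⟩ := h
  · exact ⟨fun i hi => ha' i hi ▸ hf_le _ (ha i hi), fun k hk => hb' k hk ▸ hf_le _ (hb k hk),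
      Or.inl ⟨i, hi, by rw [ha' i hi, hai, hf_fix]⟩⟩
  · exact ⟨fun i hi => ha' i hi ▸ hf_le _ (ha i hi), fun k hk => hb' k hk ▸ hf_le _ (hb k hk),
      Or.inr ⟨k, hk, by rw [hb' k hk, hbk, hf_fix]⟩⟩

theorem inv_one_add_two_mul_step {t g ω : ℝ} (htg : 1 + 2 * t * g ≠ 0) (hω : ω ≠ 0) :
    (1 + 2 * (t / ((1 + 2 * t * g) * ω)) * g)⁻¹ = ω / (ω + 1 - (1 + 2 * t * g)⁻¹) := by
  rw [← inv_div]
  field_simp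
  ring

theorem div_le_div_add_one_sub {a ω : ℝ} (hω : 0 ≤ ω) (ha : a ≤ ω) : ω / (ω + 1 - a) ≤ ω :=
  div_le_self hω (by linarith)

theorem step_le_self {t g ω : ℝ} (ht : 0 < t) (hg : 0 < g) (h : (1 + 2 * t * g)⁻¹ ≤ ω) :
    t / ((1 + 2 * t * g) * ω) ≤ t :=
  div_le_self ht.le ((inv_le_iff_one_le_mul₀' (by positivity)).1 h)

section StepRule

variable {ι : Type*} (γ : ι → ℝ) (ω : ℝ) (x : ℕ → ι → ℝ)

theorem step_pos (hγ : ∀ j, 0 < γ j) (hω : 0 < ω) (h0 : ∀ j, 0 < x 0 j)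
    (hrec : ∀ i j, x (i + 1) j = x i j / ((1 + 2 * x i j * γ j) * ω)) (i : ℕ) (j : ι) :
    0 < x i j := by
  induction i with
  | zero => exact h0 j
  | succ i ih =>
    have := hγ j
    rw [hrec]
    positivity

theorem inv_one_add_two_mul_step_succ (hγ : ∀ j, 0 < γ j) (hω : 0 < ω) (h0 : ∀ j, 0 < x 0 j)
    (hrec : ∀ i j, x (i + 1) j = x i j / ((1 + 2 * x i j * γ j) * ω)) (i : ℕ) (j : ι) :
    (1 + 2 * x (i + 1) j * γ j)⁻¹ = ω / (ω + 1 - (1 + 2 * x i j * γ j)⁻¹) := by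
  have := step_pos γ ω x hγ hω h0 hrec i j
  have := hγ j
  rw [hrec]
  exact inv_one_add_two_mul_step (by positivity) hω.ne'

end StepRule

/-- Under the linear-rate step-length rules, the quantity `ω̄` stays invariant along the
iterations, and the step lengths are non-increasing. -/
theorem stmt13 {m n : ℕ} [Nonempty (Fin m)] [Nonempty (Fin n)]
    (γtil : Fin m → ℝ) (γbar : Fin n → ℝ)
    (hγtil : ∀ j, 0 < γtil j) (hγbar : ∀ ℓ, 0 < γbar ℓ)
    (τ0 : Fin m → ℝ) (σ0 : Fin n → ℝ)
    (hτ0 : ∀ j, 0 < τ0 j) (hσ0 : ∀ ℓ, 0 < σ0 ℓ)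
    (ωbar : ℝ)
    (hωbar : ωbar = max
      (Finset.univ.sup' Finset.univ_nonempty (fun j => (1 + 2 * τ0 j * γtil j)⁻¹))
      (Finset.univ.sup' Finset.univ_nonempty (fun ℓ => (1 + 2 * σ0 ℓ * γbar ℓ)⁻¹)))
    (τ : ℕ → Fin m → ℝ) (σ : ℕ → Fin n → ℝ)
    (hτinit : τ 0 = τ0) (hσinit : σ 0 = σ0)
    (hτrec : ∀ i j, τ (i + 1) j = τ i j / ((1 + 2 * τ i j * γtil j) * ωbar))
    (hσrec : ∀ i ℓ, σ (i + 1) ℓ = σ i ℓ / ((1 + 2 * σ i ℓ * γbar ℓ) * ωbar)) :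
    (∀ i : ℕ, ωbar = max
        (Finset.univ.sup' Finset.univ_nonempty (fun j => (1 + 2 * τ i j * γtil j)⁻¹))
        (Finset.univ.sup' Finset.univ_nonempty (fun ℓ => (1 + 2 * σ i ℓ * γbar ℓ)⁻¹)))
      ∧ (∀ (i : ℕ) (j : Fin m), τ (i + 1) j ≤ τ i j)
      ∧ (∀ (i : ℕ) (ℓ : Fin n), σ (i + 1) ℓ ≤ σ i ℓ) := by
  subst hτinit hσinit
  have hω : 0 < ωbar := by
    obtain ⟨j⟩ := ‹Nonempty (Fin m)›
    have := hτ0 j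
    have := hγtil j
    have := ((eq_max_sup'_iff _ _ _ _ _).1 hωbar).1 j (Finset.mem_univ j)
    exact lt_of_lt_of_le (by positivity) this
  have hinv : ∀ i : ℕ, ωbar = max
      (Finset.univ.sup' Finset.univ_nonempty (fun j => (1 + 2 * τ i j * γtil j)⁻¹))
      (Finset.univ.sup' Finset.univ_nonempty (fun ℓ => (1 + 2 * σ i ℓ * γbar ℓ)⁻¹)) := by
    intro i
    induction i with
    | zero => exact hωbar
    | succ i ih =>
      exact eq_max_sup'_of_map _ _ (fun a => ωbar / (ωbar + 1 - a))
        (fun _ => div_le_div_add_one_sub hω.le) (by simp)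
        (fun j _ => inv_one_add_two_mul_step_succ γtil ωbar τ hγtil hω hτ0 hτrec i j)
        (fun ℓ _ => inv_one_add_two_mul_step_succ γbar ωbar σ hγbar hω hσ0 hσrec i ℓ) ih
  refine ⟨hinv, fun i j => ?_, fun i ℓ => ?_⟩
  · rw [hτrec]
    exact step_le_self (step_pos γtil ωbar τ hγtil hω hτ0 hτrec i j) (hγtil j)
      (((eq_max_sup'_iff _ _ _ _ _).1 (hinv i)).1 j (Finset.mem_univ j))
  · rw [hσrec]
    exact step_le_self (step_pos γbar ωbar σ hγbar hω hσ0 hσrec i ℓ) (hγbar ℓ)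
      (((eq_max_sup'_iff _ _ _ _ _).1 (hinv i)).2.1 ℓ (Finset.mem_univ ℓ))
end

section
/- For every i ≥ 0 and all j = 1,…,m and ℓ = 1,…,n, σ_ℓ^{i+2}·τ_j^{i+1} ≤ σ_ℓ^1·τ_j^0. -/
/-!
Since `ω̄^{i+1} ≥ (1 + 2τ_j^i γ̃_j)^{-1/2}`, the update gives `τ_j^{i+1} ≤ τ_j^i ω̄^{i+1}`, while
`σ_ℓ^{i+2} = σ_ℓ^{i+1}/ω̄^i`. Hence `σ_ℓ^{i+1} τ_j^i / ω̄^i` is nonincreasing in `i`, so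
`σ_ℓ^{i+2} τ_j^{i+1} ≤ σ_ℓ^1 τ_j^0 ω̄^{i+1} ≤ σ_ℓ^1 τ_j^0`, as `ω̄^{i+1} ≤ 1` when all `γ̃_j, τ_j^i > 0`.
-/

open Finset

lemma div_mul_le_mul_of_inv_sqrt_le {τ s ω : ℝ} (hτ : 0 ≤ τ) (hs : 0 < s)
    (hω : (√s)⁻¹ ≤ ω) : τ / (s * ω) ≤ τ * ω := by
  have hω_pos : 0 < ω := (by positivity : 0 < (√s)⁻¹).trans_le hω
  have h_sqrt : 1 ≤ √s * ω := (inv_le_iff_one_le_mul₀' (Real.sqrt_pos.mpr hs)).mp hω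
  have h_sq : 1 ≤ s * ω ^ 2 := by
    calc (1 : ℝ) ≤ (√s * ω) ^ 2 := one_le_pow₀ h_sqrt
      _ = s * ω ^ 2 := by rw [mul_pow, Real.sq_sqrt hs.le]
  rw [div_le_iff₀ (by positivity)]
  nlinarith

lemma sup'_inv_sqrt_mem_Ioc {ι : Type*} [Fintype ι] [Nonempty ι] {s : ι → ℝ}
    (hs : ∀ j, 1 ≤ s j) : univ.sup' univ_nonempty (fun j => (√(s j))⁻¹) ∈ Set.Ioc 0 1 := by
  obtain ⟨j₀⟩ := ‹Nonempty ι›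
  constructor
  · refine lt_of_lt_of_le ?_ (le_sup' (fun j => (√(s j))⁻¹) (mem_univ j₀))
    have := hs j₀
    positivity
  · exact sup'_le _ _ fun j _ => inv_le_one_of_one_le₀ (Real.one_le_sqrt.mpr (hs j))

lemma antitone_mul_div_of_step_bounds {σ τ ω : ℕ → ℝ} (hω : ∀ i, 0 < ω i)
    (hσ : ∀ i, 0 ≤ σ (i + 1)) (hσ_rec : ∀ i, σ (i + 2) = σ (i + 1) / ω i)
    (hτ : ∀ i, τ (i + 1) ≤ τ i * ω (i + 1)) :
    Antitone fun i => σ (i + 1) * τ i / ω i := by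
  refine antitone_nat_of_succ_le fun i => ?_
  have hω_i := hω i
  have hω_succ := hω (i + 1)
  calc σ (i + 2) * τ (i + 1) / ω (i + 1)
      = σ (i + 1) / ω i * (τ (i + 1) / ω (i + 1)) := by rw [hσ_rec]; ring
    _ ≤ σ (i + 1) / ω i * τ i := by
        gcongr
        · exact div_nonneg (hσ i) hω_i.le
        · exact (div_le_iff₀ hω_succ).mpr (hτ i)
    _ = σ (i + 1) * τ i / ω i := by ring

/-- Under the accelerated step-length rules of the full-primal-update method, the products
`σ_ℓ^{i+2}·τ_j^{i+1}` stay bounded by `σ_ℓ^1·τ_j^0`. -/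
theorem stmt14 {m n : ℕ} [Nonempty (Fin m)]
    (γtil : Fin m → ℝ) (hγtil : ∀ j, 0 < γtil j)
    (τ0 : Fin m → ℝ) (hτ0 : ∀ j, 0 < τ0 j)
    (σ1 : Fin n → ℝ) (hσ1 : ∀ ℓ, 0 < σ1 ℓ)
    (τ : ℕ → Fin m → ℝ) (σ : ℕ → Fin n → ℝ) (ωbar : ℕ → ℝ)
    (hτinit : τ 0 = τ0) (hσinit : σ 1 = σ1)
    (hωbar0 : ωbar 0 = 1)
    (hωbarrec : ∀ i, ωbar (i + 1) = Finset.univ.sup' Finset.univ_nonempty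
      (fun j => (Real.sqrt (1 + 2 * τ i j * γtil j))⁻¹))
    (hτrec : ∀ i j, τ (i + 1) j = τ i j / ((1 + 2 * τ i j * γtil j) * ωbar (i + 1)))
    (hσrec : ∀ i ℓ, σ (i + 2) ℓ = σ (i + 1) ℓ / ωbar i) :
    ∀ (i : ℕ) (j : Fin m) (ℓ : Fin n), σ (i + 2) ℓ * τ (i + 1) j ≤ σ 1 ℓ * τ 0 j := by
  have hs {i} (hτ_i : ∀ j, 0 < τ i j) (j) : 1 ≤ 1 + 2 * τ i j * γtil j := by
    linarith [mul_pos (hτ_i j) (hγtil j)]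
  have hω_mem {i} (hτ_i : ∀ j, 0 < τ i j) : ωbar (i + 1) ∈ Set.Ioc 0 1 :=
    hωbarrec i ▸ sup'_inv_sqrt_mem_Ioc (hs hτ_i)
  have hτ_pos : ∀ i j, 0 < τ i j := by
    intro i
    induction i with
    | zero => simpa [hτinit] using hτ0
    | succ k ih =>
      intro j
      rw [hτrec]
      have := hs ih j
      exact div_pos (ih j) (mul_pos (by positivity) (hω_mem ih).1)
  have hω_pos : ∀ i, 0 < ωbar i
    | 0 => hωbar0 ▸ one_pos
    | i + 1 => (hω_mem (hτ_pos i)).1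
  have hσ_pos : ∀ i ℓ, 0 < σ (i + 1) ℓ := by
    intro i
    induction i with
    | zero => simpa [hσinit] using hσ1
    | succ k ih => intro ℓ; rw [hσrec]; exact div_pos (ih ℓ) (hω_pos k)
  intro i j ℓ
  have hτ_step (i) : τ (i + 1) j ≤ τ i j * ωbar (i + 1) := by
    rw [hτrec]
    refine div_mul_le_mul_of_inv_sqrt_le (hτ_pos i j).le (zero_lt_one.trans_le (hs (hτ_pos i) j)) ?_
    rw [hωbarrec]
    exact le_sup' (fun j => (√(1 + 2 * τ i j * γtil j))⁻¹) (mem_univ j)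
  have h_anti := antitone_mul_div_of_step_bounds (σ := (σ · ℓ)) (τ := (τ · j)) hω_pos
    (fun i => (hσ_pos i ℓ).le) (fun i => hσrec i ℓ) hτ_step (Nat.zero_le (i + 1))
  simp only [hωbar0, div_one, zero_add] at h_anti
  obtain ⟨hω_i_pos, hω_i_le⟩ := hω_mem (hτ_pos i)
  calc σ (i + 2) ℓ * τ (i + 1) j
      ≤ σ 1 ℓ * τ 0 j * ωbar (i + 1) := (div_le_iff₀ hω_i_pos).mp h_anti
    _ ≤ σ 1 ℓ * τ 0 j := mul_le_of_le_one_right (mul_pos (hσ_pos 0 ℓ) (hτ_pos 0 j)).le hω_i_le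
end
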